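/- arXiv:2401.13747 — 8 statements merged into one kernel-verified Lean document; each statement's English description precedes it below -/
import Mathlib

section
/- If D is a decision tree for a node-weighted tree T=(V,E,ω) and T' is a subtree of T, then there exists a decision tree D' for T' (with ω restricted to V(T')) such that COST_ω(D') ≤ COST_ω(D). -/
universe u


/-- A rooted tree with nodes labeled by `α`. -/
inductive RTree (α : Type u) : Type u where
  | node : α → List (RTree α) → RTree α

namespace RTree

variable {α : Type u}

/-- The label of the root node. -/
def root : RTree α → α
  | node q _ => q

/-- Membership of a label in a rooted tree. -/
inductive Mem (x : α) : RTree α → Prop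
  | here (ts : List (RTree α)) : Mem x (.node x ts)
  | there {q : α} {ts : List (RTree α)} {t : RTree α} :
      t ∈ ts → Mem x t → Mem x (.node q ts)

/-- The set of labels occurring in a rooted tree. -/
def vertSet (t : RTree α) : Set α := {x | Mem x t}

/-- `IsSubtreeOf s t` holds when `s` is a node-rooted subtree of `t`,
i.e. `s` consists of some node of `t` together with all of its descendants. -/
inductive IsSubtreeOf : RTree α → RTree α → Prop
  | refl (t : RTree α) : IsSubtreeOf t t
  | step {s t : RTree α} {q : α} {ts : List (RTree α)} :
      t ∈ ts → IsSubtreeOf s t → IsSubtreeOf s (.node q ts)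

/-- The cost of a rooted tree w.r.t. node weights `ω`: the maximum, over all
root-to-leaf paths `P`, of the sum of the weights of the nodes on `P`
(for positive weights). -/
noncomputable def cost (ω : α → ℝ) : RTree α → ℝ
  | node q ts => ω q + (ts.attach.map (fun t => cost ω t.1)).foldr max 0
decreasing_by
  have h := List.sizeOf_lt_of_mem t.2
  simp only [RTree.node.sizeOf_spec]
  omega

end RTree

variable {V : Type u}

/-- `w` is reachable from `u` by a walk of `G` whose support stays inside `A`. -/
def ReachIn (G : SimpleGraph V) (A : Set V) (u w : V) : Prop :=
  ∃ p : G.Walk u w, ∀ x ∈ p.support, x ∈ A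

/-- The connected component of `u` inside the set `A`
(w.r.t. the subgraph of `G` induced on `A`). -/
def compIn (G : SimpleGraph V) (A : Set V) (u : V) : Set V :=
  {w ∈ A | ReachIn G A u w}

/-- A nonempty vertex subset inducing a connected subgraph
(i.e. a subtree, when `G` is a tree). -/
def ConnectedIn (G : SimpleGraph V) (A : Set V) : Prop :=
  A.Nonempty ∧ ∀ u ∈ A, ∀ w ∈ A, ReachIn G A u w

/-- `IsDecTree G S D`: `D` is a decision tree for the subgraph of `G` induced on the
vertex set `S`: the root of `D` is some `q ∈ S`, and the subtrees of `D` rooted at the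
children of `q` are decision trees for the connected components of the induced
subgraph on `S` minus `q` (one subtree per component). -/
inductive IsDecTree (G : SimpleGraph V) : Set V → RTree V → Prop
  | mk (S : Set V) (q : V) (ts : List (RTree V))
      (hq : q ∈ S)
      (hsub : ∀ t ∈ ts, IsDecTree G (RTree.vertSet t) t)
      (hcomp : ∀ t ∈ ts, ∃ u ∈ S \ {q}, RTree.vertSet t = compIn G (S \ {q}) u)
      (hcover : ∀ u ∈ S \ {q}, ∃ t ∈ ts, u ∈ RTree.vertSet t)
      (hdisj : ts.Pairwise fun t t' => Disjoint (RTree.vertSet t) (RTree.vertSet t')) :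
      IsDecTree G S (.node q ts)

/-- `OPT(T)`: the minimum of `COST_ω(D)` over all decision trees `D` for `G`. -/
noncomputable def OPTval (G : SimpleGraph V) (ω : V → ℝ) : ℝ :=
  sInf {x | ∃ D : RTree V, IsDecTree G Set.univ D ∧ x = RTree.cost ω D}

/-! Induction on a decision tree `D` for a vertex set `A ⊇ S`, with root `q`. If `q ∉ S`, the
connected set `S` lies in a single component of `A \ {q}`, i.e. inside one child of `D`, and the
induction hypothesis for that child suffices because weights are nonnegative. If `q ∈ S`, each
component of `S \ {q}` lies inside some child, so querying `q` and then following the trees the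
induction hypothesis gives for these components costs no more than `D`. -/

theorem List.le_foldr_max {α : Type*} [LinearOrder α] (l : List α) (b : α) : b ≤ l.foldr max b := by
  induction l with
  | nil => exact le_rfl
  | cons a l ih => exact le_max_of_le_right ih

theorem List.foldr_max_le_foldr_max {α : Type*} [LinearOrder α] {l l' : List α} (b : α)
    (h : ∀ a ∈ l', ∃ c ∈ l, a ≤ c) : l'.foldr max b ≤ l.foldr max b := by
  induction l' with
  | nil => exact l.le_foldr_max b
  | cons a l' ih =>
    obtain ⟨c, hc, hac⟩ := h a List.mem_cons_self
    exact max_le (List.le_max_of_le' b hc hac) (ih fun a ha => h a (List.mem_cons_of_mem _ ha))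

namespace RTree

variable {α : Type u}

theorem cost_node (ω : α → ℝ) (q : α) (ts : List (RTree α)) :
    cost ω (node q ts) = ω q + (ts.attach.map fun t => cost ω t.1).foldr max 0 := by
  rw [cost]

theorem cost_le_cost_node {ω : α → ℝ} {q : α} (hq : 0 ≤ ω q) {t : RTree α} {ts : List (RTree α)}
    (ht : t ∈ ts) : cost ω t ≤ cost ω (node q ts) := by
  have : cost ω t ≤ (ts.attach.map fun s => cost ω s.1).foldr max 0 :=
    List.le_max_of_le' 0 (List.mem_map.mpr ⟨⟨t, ht⟩, List.mem_attach _ _, rfl⟩) le_rfl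
  rw [cost_node]
  linarith

theorem cost_node_le_cost_node (ω : α → ℝ) (q : α) {ts ts' : List (RTree α)}
    (h : ∀ t' ∈ ts', ∃ t ∈ ts, cost ω t' ≤ cost ω t) :
    cost ω (node q ts') ≤ cost ω (node q ts) := by
  rw [cost_node, cost_node, add_le_add_iff_left]
  refine List.foldr_max_le_foldr_max 0 ?_
  simp only [List.mem_map, List.mem_attach, true_and, Subtype.exists, exists_prop]
  rintro _ ⟨t', ht', rfl⟩
  obtain ⟨t, ht, hle⟩ := h t' ht'
  exact ⟨_, ⟨t, ht, rfl⟩, hle⟩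

theorem vertSet_node (q : α) (ts : List (RTree α)) :
    vertSet (node q ts) = insert q (⋃ t ∈ ts, vertSet t) := by
  ext x
  constructor
  · rintro (_ | ⟨ht, hx⟩)
    · exact Set.mem_insert _ _
    · exact Set.mem_insert_of_mem _ (Set.mem_biUnion ht hx)
  · rintro (rfl | hx)
    · exact Mem.here _
    · obtain ⟨t, ht, hx⟩ := Set.mem_iUnion₂.mp hx
      exact Mem.there ht hx

theorem vertSet_finite : ∀ t : RTree α, (vertSet t).Finite
  | node q ts => by
    rw [vertSet_node]
    exact (ts.finite_toSet.biUnion fun t _ => vertSet_finite t).insert q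
decreasing_by
  have := List.sizeOf_lt_of_mem ‹t ∈ ts›
  simp only [node.sizeOf_spec]
  omega

end RTree

section Reachability

variable {G : SimpleGraph V} {A B : Set V} {u v w : V}

theorem ReachIn.rfl (hu : u ∈ A) : ReachIn G A u u :=
  ⟨.nil, by simpa using hu⟩

theorem ReachIn.symm (h : ReachIn G A u w) : ReachIn G A w u := by
  obtain ⟨p, hp⟩ := h
  exact ⟨p.reverse, fun x hx => hp x (by simpa using hx)⟩

theorem ReachIn.trans (h₁ : ReachIn G A u v) (h₂ : ReachIn G A v w) : ReachIn G A u w := by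
  obtain ⟨p, hp⟩ := h₁
  obtain ⟨r, hr⟩ := h₂
  refine ⟨p.append r, fun x hx => ?_⟩
  rcases (SimpleGraph.Walk.mem_support_append_iff _ _).mp hx with hx | hx
  exacts [hp x hx, hr x hx]

theorem ReachIn.mono (hAB : A ⊆ B) (h : ReachIn G A u w) : ReachIn G B u w :=
  let ⟨p, hp⟩ := h
  ⟨p, fun x hx => hAB (hp x hx)⟩

theorem compIn_subset : compIn G A u ⊆ A :=
  fun _ h => h.1

theorem mem_compIn_self (hu : u ∈ A) : u ∈ compIn G A u :=
  ⟨hu, .rfl hu⟩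

theorem compIn_eq_of_mem (hw : w ∈ compIn G A u) : compIn G A w = compIn G A u := by
  ext x
  exact ⟨fun hx => ⟨hx.1, hw.2.trans hx.2⟩, fun hx => ⟨hx.1, hw.2.symm.trans hx.2⟩⟩

theorem compIn_eq_or_disjoint :
    compIn G A u = compIn G A w ∨ Disjoint (compIn G A u) (compIn G A w) := by
  refine or_iff_not_imp_right.mpr fun h => ?_
  obtain ⟨x, hxu, hxw⟩ := Set.not_disjoint_iff.mp h
  rw [← compIn_eq_of_mem hxu, compIn_eq_of_mem hxw]

theorem ConnectedIn.subset_compIn (hB : ConnectedIn G B) (hBA : B ⊆ A) (hu : u ∈ B) :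
    B ⊆ compIn G A u :=
  fun w hw => ⟨hBA hw, (hB.2 u hu w hw).mono hBA⟩

theorem connectedIn_compIn (hu : u ∈ A) : ConnectedIn G (compIn G A u) := by
  classical
  have reach : ∀ w ∈ compIn G A u, ReachIn G (compIn G A u) u w := by
    rintro w ⟨-, p, hp⟩
    -- every vertex of a walk from `u` inside `A` is itself reachable from `u` inside `A`
    exact ⟨p, fun x hx => ⟨hp x hx, p.takeUntil x hx,
      fun y hy => hp y (p.support_takeUntil_subset_support hx hy)⟩⟩
  exact ⟨⟨u, mem_compIn_self hu⟩, fun w hw w' hw' => (reach w hw).symm.trans (reach w' hw')⟩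

end Reachability

namespace IsDecTree

variable {G : SimpleGraph V} {A S : Set V} {q : V} {ts : List (RTree V)}

theorem vertSet_eq {D : RTree V} (h : IsDecTree G A D) : D.vertSet = A := by
  obtain ⟨A, q, ts, hq, -, hcomp, hcover, -⟩ := h
  ext x
  rw [RTree.vertSet_node, Set.mem_insert_iff, Set.mem_iUnion₂]
  constructor
  · rintro (rfl | ⟨t, ht, hx⟩)
    · exact hq
    · obtain ⟨u, -, hveq⟩ := hcomp t ht
      exact (compIn_subset (hveq ▸ hx)).1
  · intro hx
    by_cases hxq : x = q
    · exact Or.inl hxq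
    · obtain ⟨t, ht, hxt⟩ := hcover x ⟨hx, hxq⟩
      exact Or.inr ⟨t, ht, hxt⟩

theorem finite {D : RTree V} (h : IsDecTree G A D) : A.Finite :=
  h.vertSet_eq ▸ D.vertSet_finite

theorem exists_child_superset (h : IsDecTree G A (.node q ts)) (hS : ConnectedIn G S)
    (hSA : S ⊆ A \ {q}) : ∃ t ∈ ts, S ⊆ t.vertSet := by
  cases h with | mk _ _ _ _ _ hcomp hcover _ =>
  obtain ⟨u, hu⟩ := hS.1
  obtain ⟨t, ht, hut⟩ := hcover u (hSA hu)
  obtain ⟨u', -, hveq⟩ := hcomp t ht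
  refine ⟨t, ht, ?_⟩
  rw [hveq, ← compIn_eq_of_mem (hveq ▸ hut)]
  exact hS.subset_compIn hSA hu

theorem node_of_components (hq : q ∈ S) {L : List (Set V)} (hL : L.Nodup)
    (hmem : ∀ C, C ∈ L ↔ C ∈ compIn G (S \ {q}) '' (S \ {q}))
    {f : Set V → RTree V} (hf : ∀ C ∈ L, IsDecTree G C (f C)) :
    IsDecTree G S (.node q (L.map f)) := by
  have hvert : ∀ C ∈ L, (f C).vertSet = C := fun C hC => (hf C hC).vertSet_eq
  have hcomp : ∀ C ∈ L, ∃ u ∈ S \ {q}, C = compIn G (S \ {q}) u := fun C hC =>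
    let ⟨u, hu, hCu⟩ := (hmem C).mp hC
    ⟨u, hu, hCu.symm⟩
  refine mk S q _ hq ?_ ?_ ?_ ?_
  · simp only [List.mem_map, forall_exists_index, and_imp, forall_apply_eq_imp_iff₂]
    intro C hC
    simpa only [hvert C hC] using hf C hC
  · simp only [List.mem_map, forall_exists_index, and_imp, forall_apply_eq_imp_iff₂]
    intro C hC
    rw [hvert C hC]
    exact hcomp C hC
  · intro u hu
    have hC : compIn G (S \ {q}) u ∈ L := (hmem _).mpr ⟨u, hu, rfl⟩
    exact ⟨_, List.mem_map_of_mem hC, (hvert _ hC).symm ▸ mem_compIn_self hu⟩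
  · rw [List.pairwise_map]
    refine hL.imp_of_mem fun {C C'} hC hC' hne => ?_
    obtain ⟨u, -, rfl⟩ := hcomp C hC
    obtain ⟨u', -, rfl⟩ := hcomp C' hC'
    rw [hvert _ hC, hvert _ hC']
    exact compIn_eq_or_disjoint.resolve_left hne

theorem exists_le_cost_of_subset {ω : V → ℝ} (hω : ∀ v, 0 ≤ ω v)
    {D : RTree V} (hD : IsDecTree G A D) (hS : ConnectedIn G S)
    (hSA : S ⊆ A) : ∃ D', IsDecTree G S D' ∧ D'.cost ω ≤ D.cost ω := by
  induction hD generalizing S with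
  | mk A q ts hq hsub hcomp hcover hdisj ih =>
  have hD : IsDecTree G A (.node q ts) := .mk A q ts hq hsub hcomp hcover hdisj
  by_cases hqS : q ∈ S
  · set B := S \ {q}
    have hBA : B ⊆ A \ {q} := Set.sdiff_subset_sdiff_left hSA
    have child : ∀ C, ∃ D', C ∈ compIn G B '' B →
        IsDecTree G C D' ∧ ∃ t ∈ ts, D'.cost ω ≤ t.cost ω := by
      intro C
      by_cases hC : C ∈ compIn G B '' B
      · obtain ⟨u, hu, rfl⟩ := hC
        obtain ⟨t, ht, hCt⟩ :=
          hD.exists_child_superset (connectedIn_compIn hu) (compIn_subset.trans hBA)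
        obtain ⟨D', hD', hcost⟩ := ih t ht (connectedIn_compIn hu) hCt
        exact ⟨D', fun _ => ⟨hD', t, ht, hcost⟩⟩
      · exact ⟨.node q [], fun h => absurd h hC⟩
    choose f hf using child
    have hfin : (compIn G B '' B).Finite := ((hD.finite.subset hSA).sdiff).image _
    refine ⟨.node q (hfin.toFinset.toList.map f), ?_, ?_⟩
    · refine node_of_components hqS (Finset.nodup_toList _)
        (fun C => by rw [Finset.mem_toList, Set.Finite.mem_toFinset]) fun C hC => ?_
      exact (hf C (by simpa using hC)).1
    · refine RTree.cost_node_le_cost_node ω q ?_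
      simp only [List.mem_map, Finset.mem_toList, Set.Finite.mem_toFinset]
      rintro _ ⟨C, hC, rfl⟩
      exact (hf C hC).2
  · have hSA' : S ⊆ A \ {q} := fun x hx => ⟨hSA hx, fun hxq => hqS (hxq ▸ hx)⟩
    obtain ⟨t, ht, hSt⟩ := hD.exists_child_superset hS hSA'
    obtain ⟨D', hD', hcost⟩ := ih t ht hS hSt
    exact ⟨D', hD', hcost.trans (RTree.cost_le_cost_node (hω q) ht)⟩

end IsDecTree

theorem stmt1_general {V : Type u} (G : SimpleGraph V)
    (ω : V → ℝ) (hω : ∀ v, 0 < ω v)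
    (D : RTree V) (hD : IsDecTree G Set.univ D)
    (S : Set V) (hS : ConnectedIn G S) :
    ∃ D' : RTree V, IsDecTree G S D' ∧ RTree.cost ω D' ≤ RTree.cost ω D :=
  hD.exists_le_cost_of_subset (fun v => (hω v).le) hS (Set.subset_univ S)

/-- If `D` is a decision tree for a node-weighted tree `T = (V,E,ω)`
and `T'` is a subtree of `T` (given by a nonempty connected vertex set `S`), then there
exists a decision tree `D'` for `T'` such that `COST_ω(D') ≤ COST_ω(D)`. -/
theorem stmt1 {V : Type u} [Fintype V] (G : SimpleGraph V) (hG : G.IsTree)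
    (ω : V → ℝ) (hω : ∀ v, 0 < ω v)
    (D : RTree V) (hD : IsDecTree G Set.univ D)
    (S : Set V) (hS : ConnectedIn G S) :
    ∃ D' : RTree V, IsDecTree G S D' ∧ RTree.cost ω D' ≤ RTree.cost ω D :=
  stmt1_general G ω hω D hD S hS
end

section
/- Let f be an extended strategy function for a tree T=(V,E) with cost function ω. Then there is exactly one vertex q ∈ V whose interval f(q)=[a,b) attains the maximum right endpoint, i.e., with sup f(q) = max_{v∈V} sup f(v). -/
universe u

/-- A half-open interval `[a, b)` with integer endpoints `0 ≤ a < b`. -/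
structure HInterval : Type where
  a : ℕ
  b : ℕ
  hab : a < b

namespace HInterval

/-- The interval `[a, b)` as a set of naturals. -/
def toSet (I : HInterval) : Set ℕ := Set.Ico I.a I.b

/-- The length `|[a,b)| = b - a` of an interval. -/
def len (I : HInterval) : ℕ := I.b - I.a

/-- `I < J` for intervals `I = [a,b)`, `J = [a',b')`: it means `b ≤ a'`. -/
def Lt (I J : HInterval) : Prop := I.b ≤ J.a

/-- `K > I ∪ J`: the interval `K` lies entirely above both `I` and `J`. -/
def GtUnion (K I J : HInterval) : Prop := I.b ≤ K.a ∧ J.b ≤ K.a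

/-- The interval shifted by a constant `c`, i.e. `[a+c, b+c)`. -/
def shift (I : HInterval) (c : ℕ) : HInterval :=
  ⟨I.a + c, I.b + c, by have := I.hab; omega⟩

end HInterval

variable {V : Type u}

/-- `v` lies on the path between `r` and `u` in `G` (when `G` is a tree,
the path between any two vertices is unique). -/
def OnPath (G : SimpleGraph V) (r u v : V) : Prop :=
  ∀ p : G.Walk r u, p.IsPath → v ∈ p.support

/-- An extended strategy function for `(G, ω)`: it assigns to each vertex `v` an
interval of length at least `ω v` such that, whenever the intervals of two distinct
vertices intersect, the path connecting them contains a vertex whose interval lies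
above the union of the two intervals. -/
def IsESF (G : SimpleGraph V) (ω : V → ℝ) (f : V → HInterval) : Prop :=
  (∀ v, ω v ≤ ((f v).len : ℝ)) ∧
  ∀ v₁ v₂ : V, v₁ ≠ v₂ → ((f v₁).toSet ∩ (f v₂).toSet).Nonempty →
    ∀ p : G.Walk v₁ v₂, p.IsPath →
      ∃ v₃ ∈ p.support, (f v₃).GtUnion (f v₁) (f v₂)

/-- `sup ⋃_{v ∈ V} f(v)`: the supremum of the union of all assigned intervals. -/
noncomputable def supEnd [Fintype V] (f : V → HInterval) : ℕ :=
  Finset.univ.sup fun v => (f v).b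

/-- An extended strategy function is optimal if the supremum of the union of its
intervals is minimal among all extended strategy functions for `(G, ω)`. -/
def IsOptimalESF [Fintype V] (G : SimpleGraph V) (ω : V → ℝ) (f : V → HInterval) : Prop :=
  IsESF G ω f ∧ ∀ g : V → HInterval, IsESF G ω g → supEnd f ≤ supEnd g

/-- `u` is screening `v`: `u` is the only vertex `x` on the path connecting `v`
and `u` with `f v < f x`. -/
def Screens (G : SimpleGraph V) (f : V → HInterval) (v u : V) : Prop :=
  ∀ p : G.Walk v u, p.IsPath → ∀ x ∈ p.support, ((f v).Lt (f x) ↔ x = u)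

/-- `u` belongs to the screening neighborhood `N(v)` of `v`: `u` is `v` itself, or
`u` is screening `v`, or the path connecting `u` and `v` has no vertex screening `v`. -/
def InScrNbhd (G : SimpleGraph V) (f : V → HInterval) (v u : V) : Prop :=
  u = v ∨ Screens G f v u ∨
    ∀ p : G.Walk u v, p.IsPath → ∀ x ∈ p.support, ¬ Screens G f v x

/-- `u` is visible from `v`: no vertex `x` on the path connecting `u` and `v`
satisfies `f u < f x`. -/
def Visible (G : SimpleGraph V) (f : V → HInterval) (u v : V) : Prop :=
  ∀ p : G.Walk u v, p.IsPath → ∀ x ∈ p.support, ¬ (f u).Lt (f x)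

/-- The vertex `u` is aligned w.r.t. `f` and `ω` if both endpoints of `f u`
are integer multiples of `ω u`. -/
def AlignedAt (ω : V → ℝ) (f : V → HInterval) (u : V) : Prop :=
  (∃ m : ℕ, ((f u).a : ℝ) = m * ω u) ∧ (∃ m : ℕ, ((f u).b : ℝ) = m * ω u)

/-- An extended strategy function on the subgraph of `G` induced by the vertex set `A`. -/
def IsESFOn (G : SimpleGraph V) (ω : V → ℝ) (f : V → HInterval) (A : Set V) : Prop :=
  (∀ v ∈ A, ω v ≤ ((f v).len : ℝ)) ∧
  ∀ v₁ ∈ A, ∀ v₂ ∈ A, v₁ ≠ v₂ → ((f v₁).toSet ∩ (f v₂).toSet).Nonempty →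
    ∀ p : G.Walk v₁ v₂, p.IsPath → (∀ x ∈ p.support, x ∈ A) →
      ∃ v₃ ∈ p.support, (f v₃).GtUnion (f v₁) (f v₂)

theorem HInterval.toSet_inter_nonempty_of_b_eq {I J : HInterval} (h : I.b = J.b) :
    (I.toSet ∩ J.toSet).Nonempty := by
  have hI := I.hab
  have hJ := J.hab
  refine ⟨J.b - 1, ?_, ?_⟩ <;> simp only [HInterval.toSet, Set.mem_Ico] <;> omega

theorem HInterval.GtUnion.b_lt {K I J : HInterval} (h : K.GtUnion I J) : I.b < K.b :=
  h.1.trans_lt K.hab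

/-- Since intervals with a common right endpoint overlap, the ESF condition puts a third
interval above both of them. -/
theorem IsESF.exists_b_gt_of_b_eq {G : SimpleGraph V} {ω : V → ℝ} {f : V → HInterval}
    (hf : IsESF G ω f) (hG : G.Connected) {v₁ v₂ : V} (hne : v₁ ≠ v₂)
    (hb : (f v₁).b = (f v₂).b) : ∃ v₃, (f v₁).b < (f v₃).b := by
  classical
  obtain ⟨w⟩ := hG v₁ v₂
  obtain ⟨v₃, -, hv₃⟩ := hf.2 v₁ v₂ hne (HInterval.toSet_inter_nonempty_of_b_eq hb)
    w.toPath w.toPath.isPath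
  exact ⟨v₃, hv₃.b_lt⟩

theorem stmt5_general {V : Type u} [Fintype V] (G : SimpleGraph V) (hG : G.IsTree)
    (ω : V → ℝ)
    (f : V → HInterval) (hf : IsESF G ω f) :
    ∃! q : V, ∀ v : V, (f v).b ≤ (f q).b := by
  have : Nonempty V := hG.connected.nonempty
  obtain ⟨q, hq⟩ := Finite.exists_max fun v => (f v).b
  refine ⟨q, hq, fun y hy => ?_⟩
  by_contra hyq
  have hb : (f y).b = (f q).b := (hq y).antisymm (hy q)
  obtain ⟨v, hv⟩ := hf.exists_b_gt_of_b_eq hG.connected hyq hb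
  exact (hv.trans_le (hq v)).ne hb

/-- Let `f` be an extended strategy function for a tree `T = (V,E)`
with positive cost function `ω`. Then there is exactly one vertex `q ∈ V` whose interval
attains the maximum right endpoint, i.e. with `sup f(q) = max_{v ∈ V} sup f(v)`. -/
theorem stmt5 {V : Type u} [Fintype V] (G : SimpleGraph V) (hG : G.IsTree)
    (ω : V → ℝ) (hω : ∀ v, 0 < ω v)
    (f : V → HInterval) (hf : IsESF G ω f) :
    ∃! q : V, ∀ v : V, (f v).b ≤ (f q).b :=
  stmt5_general G hG ω f hf
end

section
/- Let f be an extended strategy function for a tree T with cost function ω, and let v be a vertex. If s and s' are distinct vertices each screening v, then f(s) ∩ f(s') = ∅. -/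
universe u

variable {V : Type u}

/-- Let `f` be an extended strategy function for a tree `T` with cost
function `ω`, and let `v` be a vertex. If `s` and `s'` are distinct vertices each
screening `v`, then `f(s) ∩ f(s') = ∅`. -/
theorem stmt9 {V : Type u} (G : SimpleGraph V) (hG : G.IsTree)
    (ω : V → ℝ) (hω : ∀ v, 0 < ω v)
    (f : V → HInterval) (hf : IsESF G ω f)
    (v s s' : V) (hs : Screens G f v s) (hs' : Screens G f v s') (hne : s ≠ s') :
    (f s).toSet ∩ (f s').toSet = ∅ := by
  classical
  by_contra h
  have hnon : ((f s).toSet ∩ (f s').toSet).Nonempty :=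
    Set.nonempty_iff_ne_empty.mpr h
  -- paths from v to s and v to s'
  have hconn := hG.isConnected
  obtain ⟨w1⟩ := hconn.preconnected v s
  obtain ⟨w2⟩ := hconn.preconnected v s'
  set p1 := w1.toPath with hp1def
  set p2 := w2.toPath with hp2def
  -- a path from s to s'
  set q := ((p1 : G.Walk v s).reverse.append (p2 : G.Walk v s')).bypass with hqdef
  have hqpath : q.IsPath := SimpleGraph.Walk.bypass_isPath _
  obtain ⟨v₃, hv₃mem, hv₃gt⟩ := hf.2 s s' hne hnon q hqpath
  have hv₃mem' : v₃ ∈ ((p1 : G.Walk v s).reverse.append (p2 : G.Walk v s')).support :=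
    SimpleGraph.Walk.support_bypass_subset _ hv₃mem
  rw [SimpleGraph.Walk.mem_support_append_iff] at hv₃mem'
  -- f v < f s and f v < f s'
  have hvs : (f v).Lt (f s) :=
    (hs p1 p1.2 s (SimpleGraph.Walk.end_mem_support _)).mpr rfl
  have hvs' : (f v).Lt (f s') :=
    (hs' p2 p2.2 s' (SimpleGraph.Walk.end_mem_support _)).mpr rfl
  rcases hv₃mem' with hm | hm
  · rw [SimpleGraph.Walk.support_reverse, List.mem_reverse] at hm
    have hlt : (f v).Lt (f v₃) := by
      have h1 := hv₃gt.1
      have := (f s).hab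
      unfold HInterval.Lt at *
      omega
    have heq : v₃ = s := (hs p1 p1.2 v₃ hm).mp hlt
    have := hv₃gt.1
    rw [heq] at this
    exact absurd this (by have := (f s).hab; omega)
  · have hlt : (f v).Lt (f v₃) := by
      have h1 := hv₃gt.2
      have := (f s').hab
      unfold HInterval.Lt at *
      omega
    have heq : v₃ = s' := (hs' p2 p2.2 v₃ hm).mp hlt
    have := hv₃gt.2
    rw [heq] at this
    exact absurd this (by have := (f s').hab; omega)
end

section
/- Let f be an extended strategy function for a tree T with cost function ω, and let v be a vertex. For every vertex u in the screening neighborhood N(v) with u ≠ v, it holds that f(v) ∩ f(u) = ∅. -/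
universe u

variable {V : Type u}

/-- In a tree, if a path from `v` to `u` ends at a vertex with `f v < f u`,
then some vertex on the path screens `v`. -/
lemma exists_screening {V : Type u} (G : SimpleGraph V) (hG : G.IsTree)
    (f : V → HInterval) (v : V) :
    ∀ n : ℕ, ∀ u : V, ∀ p : G.Walk v u, p.IsPath → p.length ≤ n →
      (f v).Lt (f u) → ∃ x ∈ p.support, Screens G f v x := by
  classical
  intro n
  induction n with
  | zero =>
    intro u p hp hl hlt
    have : v = u := SimpleGraph.Walk.eq_of_length_eq_zero (Nat.le_zero.mp hl)
    subst this
    have := (f v).hab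
    exact absurd hlt (by simp [HInterval.Lt]; omega)
  | succ n ih =>
    intro u p hp hl hlt
    by_cases h : ∃ y ∈ p.support, y ≠ u ∧ (f v).Lt (f y)
    · obtain ⟨y, hy, hyu, hylt⟩ := h
      have hq : (p.takeUntil y hy).IsPath := hp.takeUntil hy
      have hspec := p.take_spec hy
      have hlen : (p.takeUntil y hy).length + (p.dropUntil y hy).length = p.length := by
        have := congrArg SimpleGraph.Walk.length hspec
        rwa [SimpleGraph.Walk.length_append] at this
      have hdrop : (p.dropUntil y hy).length ≠ 0 := fun h0 =>
        hyu (SimpleGraph.Walk.eq_of_length_eq_zero h0)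
      have hqn : (p.takeUntil y hy).length ≤ n := by omega
      obtain ⟨x, hx, hxs⟩ := ih y (p.takeUntil y hy) hq hqn hylt
      exact ⟨x, SimpleGraph.Walk.support_takeUntil_subset p hy hx, hxs⟩
    · push_neg at h
      refine ⟨u, p.end_mem_support, ?_⟩
      intro p' hp' x hx
      have hup : p' = p := by
        obtain ⟨q, -, hq⟩ := hG.existsUnique_path v u
        rw [hq p' hp', hq p hp]
      subst hup
      constructor
      · intro hxlt
        by_contra hxu
        exact h x hx hxu hxlt
      · rintro rfl; exact hlt

/-- Let `f` be an extended strategy function for a tree `T` with cost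
function `ω`, and let `v` be a vertex. For every vertex `u` in the screening neighborhood
`N(v)` with `u ≠ v`, it holds that `f(v) ∩ f(u) = ∅`. -/
theorem stmt11 {V : Type u} (G : SimpleGraph V) (hG : G.IsTree)
    (ω : V → ℝ) (hω : ∀ v, 0 < ω v)
    (f : V → HInterval) (hf : IsESF G ω f)
    (v u : V) (hu : InScrNbhd G f v u) (hne : u ≠ v) :
    (f v).toSet ∩ (f u).toSet = ∅ := by
  classical
  by_contra hcon
  have hne' : ((f v).toSet ∩ (f u).toSet).Nonempty :=
    Set.nonempty_iff_ne_empty.mpr hcon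
  obtain ⟨p, hp⟩ := (hG.existsUnique_path v u).exists
  obtain ⟨w, hw, hgt⟩ := hf.2 v u (Ne.symm hne) hne' p hp
  have hvw : (f v).Lt (f w) := hgt.1
  obtain ⟨x, hx, hxs⟩ := exists_screening G hG f v (p.takeUntil w hw).length w
    (p.takeUntil w hw) (hp.takeUntil hw) le_rfl hvw
  have hxp : x ∈ p.support := SimpleGraph.Walk.support_takeUntil_subset p hw hx
  rcases hu with rfl | hscr | h3
  · exact hne rfl
  · have := (hscr p hp w hw).mp hvw
    subst this
    have := (f w).hab
    have := hgt.2
    simp [HInterval.Lt, HInterval.GtUnion] at *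
    omega
  · refine h3 p.reverse hp.reverse x ?_ hxs
    rw [SimpleGraph.Walk.support_reverse, List.mem_reverse]
    exact hxp
end

section
/- Let f be an extended strategy function for a tree T=(V,E,ω) and let v ∈ V be a vertex that is screened by at least one vertex; let s_min be the vertex screening v whose interval f(s_min) is minimal (has the smallest left endpoint) among all vertices screening v. Let f' be any function assigning to each vertex u an interval f'(u) with |f'(u)| ≥ ω(u) such that: (1) f'(u)=f(u) for every u ∉ N(v); (2) f'(u)=f(u) for every u ∈ N(v) that is screening v; and (3) f'(u) < f(s_min) for every u ∈ N(v) that is not screening v (including v itself). If f' restricted to the induced subtree T[N(v)] is an extended strategy function for T[N(v)], then f' is an extended strategy function for the entire tree T. -/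
universe u

variable {V : Type u}

section Stmt12Aux

open SimpleGraph

variable {V : Type u} {G : SimpleGraph V}

/-- Auxiliary: no vertex on a path from `u` to `v` screens `v`
(exactly clause 3 of `InScrNbhd`). -/
def NonScr (G : SimpleGraph V) (f : V → HInterval) (v u : V) : Prop :=
  ∀ q : G.Walk u v, q.IsPath → ∀ x ∈ q.support, ¬ Screens G f v x

lemma walk_length_pos {a b : V} (q : G.Walk a b) (h : a ≠ b) : 0 < q.length := by
  cases q with
  | nil => exact absurd rfl h
  | cons h' p => simp

lemma tree_path_eq (hG : G.IsTree) {a b : V} {p q : G.Walk a b}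
    (hp : p.IsPath) (hq : q.IsPath) : p = q :=
  (hG.existsUnique_path a b).unique hp hq

lemma tree_exists_path (hG : G.IsTree) (a b : V) : ∃ p : G.Walk a b, p.IsPath :=
  (hG.existsUnique_path a b).exists

lemma not_screens_self (f : V → HInterval) (v : V) : ¬ Screens G f v v := by
  intro h
  have := (h Walk.nil Walk.IsPath.nil v (Walk.start_mem_support _)).mpr rfl
  have hab := (f v).hab
  simp only [HInterval.Lt] at this
  omega

/-- If `f v < f u` for the end of a path from `v`, then some vertex on that path
screens `v` (take the first vertex whose interval lies above `f v`). -/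
lemma scr_exists (hG : G.IsTree) (f : V → HInterval) (v : V) :
    ∀ n : ℕ, ∀ (u : V) (q : G.Walk v u), q.length ≤ n → q.IsPath → (f v).Lt (f u) →
      ∃ x ∈ q.support, Screens G f v x := by
  classical
  intro n
  induction n with
  | zero =>
    intro u q hl hp hlt
    cases q with
    | nil =>
      have hab := (f v).hab
      simp only [HInterval.Lt] at hlt
      omega
    | cons h' p => simp at hl
  | succ n ih =>
    intro u q hl hp hlt
    by_cases hall : ∀ y ∈ q.support, (f v).Lt (f y) → y = u
    · refine ⟨u, q.end_mem_support, ?_⟩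
      intro p hp' y hy
      have hpq : p = q := tree_path_eq hG hp' hp
      subst hpq
      exact ⟨fun h => hall y hy h, fun h => h ▸ hlt⟩
    · push_neg at hall
      obtain ⟨y, hy, hylt, hyne⟩ := hall
      have hspec := congrArg SimpleGraph.Walk.length (q.take_spec hy)
      rw [Walk.length_append] at hspec
      have hdp : 0 < (q.dropUntil y hy).length := walk_length_pos _ hyne
      have hlen' : (q.takeUntil y hy).length ≤ n := by omega
      obtain ⟨x, hx, hsx⟩ := ih y (q.takeUntil y hy) hlen' (hp.takeUntil hy) hylt
      exact ⟨x, q.support_takeUntil_subset hy hx, hsx⟩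

lemma nonscr_mono (hG : G.IsTree) {f : V → HInterval} {v u x : V}
    (hu : NonScr G f v u) {q : G.Walk u v} (hq : q.IsPath) (hx : x ∈ q.support) :
    NonScr G f v x := by
  classical
  intro r hr y hy
  have hre : r = q.dropUntil x hx := tree_path_eq hG hr (hq.dropUntil hx)
  rw [hre] at hy
  exact hu q hq y (q.support_dropUntil_subset hx hy)

lemma nonscr_self (hG : G.IsTree) (f : V → HInterval) (v : V) : NonScr G f v v := by
  intro q hq x hx
  have : q = Walk.nil := tree_path_eq hG hq Walk.IsPath.nil
  rw [this] at hx
  simp only [Walk.support_nil, List.mem_singleton] at hx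
  rw [hx]
  exact not_screens_self f v

lemma nonscr_low (hG : G.IsTree) {f : V → HInterval} {v u : V}
    (hu : NonScr G f v u) : (f u).a < (f v).b := by
  by_cases h : u = v
  · rw [h]; exact (f v).hab
  · by_contra hle
    push_neg at hle
    obtain ⟨q, hq⟩ := tree_exists_path hG u v
    obtain ⟨x, hx, hsx⟩ :=
      scr_exists hG f v q.reverse.length u q.reverse le_rfl hq.reverse hle
    rw [Walk.support_reverse, List.mem_reverse] at hx
    exact hu q hq x hx hsx

lemma not_nonscr_of_screens (hG : G.IsTree) {f : V → HInterval} {v s : V}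
    (hs : Screens G f v s) : ¬ NonScr G f v s := by
  intro hn
  obtain ⟨q, hq⟩ := tree_exists_path hG s v
  exact hn q hq s q.start_mem_support hs

end Stmt12Aux

/-- Let `f` be an extended strategy function for `T = (V,E,ω)` and let
`v` be a vertex screened by at least one vertex; let `s_min` be the vertex screening `v`
whose interval is minimal (smallest left endpoint) among all vertices screening `v`.
Let `f'` assign to each vertex `u` an interval with `|f'(u)| ≥ ω(u)` such that:
(1) `f'(u) = f(u)` for every `u ∉ N(v)`;
(2) `f'(u) = f(u)` for every `u ∈ N(v)` screening `v`; and
(3) `f'(u) < f(s_min)` for every `u ∈ N(v)` not screening `v` (including `v`).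
If `f'` restricted to the induced subtree `T[N(v)]` is an extended strategy function for
`T[N(v)]`, then `f'` is an extended strategy function for the entire tree `T`. -/
theorem stmt12 {V : Type u} (G : SimpleGraph V) (hG : G.IsTree)
    (ω : V → ℝ) (hω : ∀ v, 0 < ω v)
    (f : V → HInterval) (hf : IsESF G ω f)
    (v s_min : V) (hsmin : Screens G f v s_min)
    (hmin : ∀ s, Screens G f v s → (f s_min).a ≤ (f s).a)
    (f' : V → HInterval) (hlen : ∀ u, ω u ≤ ((f' u).len : ℝ))
    (h1 : ∀ u, ¬ InScrNbhd G f v u → f' u = f u)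
    (h2 : ∀ u, InScrNbhd G f v u → Screens G f v u → f' u = f u)
    (h3 : ∀ u, InScrNbhd G f v u → ¬ Screens G f v u → (f' u).Lt (f s_min))
    (hESF' : IsESFOn G ω f' {u | InScrNbhd G f v u}) :
    IsESF G ω f' := by
    classical
  -- Preliminary facts
  have hvb : (f v).b ≤ (f s_min).a := by
    obtain ⟨p₀, hp₀⟩ := tree_exists_path hG v s_min
    exact (hsmin p₀ hp₀ s_min p₀.end_mem_support).mpr rfl
  have hfe : ∀ u, ¬ NonScr G f v u → f' u = f u := by
    intro u hu
    by_cases hi : InScrNbhd G f v u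
    · rcases hi with h | h | h
      · exact absurd (h ▸ nonscr_self hG f v) hu
      · exact h2 u (Or.inr (Or.inl h)) h
      · exact absurd h hu
    · exact h1 u hi
  have hnotscr : ∀ u, NonScr G f v u → ¬ Screens G f v u :=
    fun u hu hs => not_nonscr_of_screens hG hs hu
  have hfl : ∀ u, NonScr G f v u → (f' u).b ≤ (f s_min).a := by
    intro u hu
    exact h3 u (Or.inr (Or.inr hu)) (hnotscr u hu)
  have hnlow : ∀ u, NonScr G f v u → (f u).a < (f s_min).a :=
    fun u hu => lt_of_lt_of_le (nonscr_low hG hu) hvb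
  -- Boundary: a path from a non-`NonScr` vertex to a `NonScr` vertex contains
  -- a vertex screening `v`.
  have hbd : ∀ (a b : V) (r : G.Walk a b), r.IsPath → ¬ NonScr G f v a →
      NonScr G f v b → ∃ s ∈ r.support, Screens G f v s := by
    intro a b r hr hna hnb
    obtain ⟨qb, hqb⟩ := tree_exists_path hG b v
    have hda : ¬ ∀ x ∈ (r.append qb).bypass.support, ¬ Screens G f v x := by
      intro hall
      refine hna (fun q hq x hx hsx => hall x ?_ hsx)
      rwa [tree_path_eq hG hq ((r.append qb).bypass_isPath)] at hx
    push_neg at hda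
    obtain ⟨s, hs, hss⟩ := hda
    have hs' := SimpleGraph.Walk.support_bypass_subset _ hs
    rw [SimpleGraph.Walk.mem_support_append_iff] at hs'
    rcases hs' with h | h
    · exact ⟨s, h, hss⟩
    · exact absurd hss (hnb qb hqb s h)
  -- The path between two `NonScr` vertices stays `NonScr`.
  have hAin : ∀ (a b : V), NonScr G f v a → NonScr G f v b →
      ∀ (p : G.Walk a b), p.IsPath → ∀ x ∈ p.support, NonScr G f v x := by
    intro a b hna hnb p hp x hx
    obtain ⟨qa, hqa⟩ := tree_exists_path hG a v
    obtain ⟨qb, hqb⟩ := tree_exists_path hG b v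
    have hpeq : p = (qa.append qb.reverse).bypass :=
      tree_path_eq hG hp (SimpleGraph.Walk.bypass_isPath _)
    rw [hpeq] at hx
    have hx' := SimpleGraph.Walk.support_bypass_subset _ hx
    rw [SimpleGraph.Walk.mem_support_append_iff] at hx'
    rcases hx' with h | h
    · exact nonscr_mono hG hna hqa h
    · rw [SimpleGraph.Walk.support_reverse, List.mem_reverse] at h
      exact nonscr_mono hG hnb hqb h
  -- Case: one endpoint lowered, one not.
  have hC : ∀ (a b : V), a ≠ b → NonScr G f v a → ¬ NonScr G f v b →
      ((f' a).toSet ∩ (f' b).toSet).Nonempty → ∀ p : G.Walk a b, p.IsPath →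
      ∃ v₃ ∈ p.support, (f' v₃).GtUnion (f' a) (f' b) := by
    intro a b hab hna hnb hint p hp
    obtain ⟨t, hta, htb⟩ := hint
    simp only [HInterval.toSet, Set.mem_Ico] at hta htb
    have hfa : (f' a).b ≤ (f s_min).a := hfl a hna
    have hfb : f' b = f b := hfe b hnb
    rw [hfb] at htb
    have hbns : ¬ Screens G f v b := by
      intro hsb
      have := hmin b hsb
      omega
    obtain ⟨s, hs, hss⟩ := hbd b a p.reverse hp.reverse hnb hna
    have hsp : s ∈ p.support := by
      rwa [SimpleGraph.Walk.support_reverse, List.mem_reverse] at hs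
    have hsa : (f s_min).a ≤ (f s).a := hmin s hss
    have hfs : f' s = f s := hfe s (not_nonscr_of_screens hG hss)
    have hsb2 : b ≠ s := fun h => hbns (h ▸ hss)
    by_cases hcase : (f b).b ≤ (f s).a
    · refine ⟨s, hsp, ?_, ?_⟩ <;> rw [hfs]
      · show (f' a).b ≤ (f s).a; omega
      · rw [hfb]; exact hcase
    · push_neg at hcase
      have hbsint : ((f b).toSet ∩ (f s).toSet).Nonempty := by
        refine ⟨(f s).a, ⟨?_, hcase⟩, ⟨le_rfl, (f s).hab⟩⟩
        omega
      have hrp : p.reverse.IsPath := hp.reverse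
      obtain ⟨w, hw, hgw⟩ :=
        hf.2 b s hsb2 hbsint (p.reverse.takeUntil s hs) (hrp.takeUntil hs)
      obtain ⟨hgw1, hgw2⟩ := hgw
      have hwp : w ∈ p.support := by
        have := p.reverse.support_takeUntil_subset hs hw
        rwa [SimpleGraph.Walk.support_reverse, List.mem_reverse] at this
      have hwn : ¬ NonScr G f v w := by
        intro hn
        have := hnlow w hn
        have := (f s).hab
        omega
      refine ⟨w, hwp, ?_, ?_⟩ <;> rw [hfe w hwn]
      · show (f' a).b ≤ (f w).a
        have := (f s).hab
        omega
      · rw [hfb]; exact hgw1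
  refine ⟨hlen, ?_⟩
  intro v₁ v₂ hne hint p hp
  by_cases hd1 : NonScr G f v v₁ <;> by_cases hd2 : NonScr G f v v₂
  · -- both lowered: use the restricted ESF
    exact hESF'.2 v₁ (Or.inr (Or.inr hd1)) v₂ (Or.inr (Or.inr hd2)) hne hint p hp
      (fun x hx => Or.inr (Or.inr (hAin v₁ v₂ hd1 hd2 p hp x hx)))
  · exact hC v₁ v₂ hne hd1 hd2 hint p hp
  · obtain ⟨v₃, hm, hg1, hg2⟩ :=
      hC v₂ v₁ hne.symm hd2 hd1 (by rwa [Set.inter_comm] at hint) p.reverse hp.reverse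
    rw [SimpleGraph.Walk.support_reverse, List.mem_reverse] at hm
    exact ⟨v₃, hm, hg2, hg1⟩
  · -- neither endpoint lowered: use the original ESF, repairing the witness if lowered
    rw [hfe v₁ hd1, hfe v₂ hd2] at hint ⊢
    obtain ⟨v₃, h3p, hg⟩ := hf.2 v₁ v₂ hne hint p hp
    by_cases hd3 : NonScr G f v v₃
    · obtain ⟨hg1, hg2⟩ := hg
      have hv3a : (f v₃).a < (f s_min).a := hnlow v₃ hd3
      obtain ⟨s, hs, hss⟩ := hbd v₁ v₃ (p.takeUntil v₃ h3p) (hp.takeUntil h3p) hd1 hd3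
      refine ⟨s, p.support_takeUntil_subset h3p hs, ?_, ?_⟩ <;>
        rw [hfe s (not_nonscr_of_screens hG hss)]
      · show (f v₁).b ≤ (f s).a
        have := hmin s hss
        omega
      · show (f v₂).b ≤ (f s).a
        have := hmin s hss
        omega
    · exact ⟨v₃, h3p, by rw [hfe v₃ hd3]; exact hg⟩
end

section
/- Let f be an extended strategy function for a tree T=(V,E,ω) with rounded cost function and with |f(u)| = ω(u) for every vertex u. Let v be an unaligned vertex such that f(v) is minimal (has the smallest left endpoint) among the intervals of all unaligned vertices; write ω(v)=2^k and f(v)=[x_v, y_v), and let a ∈ ℕ satisfy a·2^k < x_v < (a+1)·2^k. Then for each vertex u in the screening neighborhood N(v) with f(u) ∩ [a·2^k, x_v) ≠ ∅, it holds that f(u) ⊆ [a·2^k, x_v). -/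
universe u

variable {V : Type u}

section FirstOnWalk

variable {V : Type u}

/-- On a path from `v` to `u` containing a vertex satisfying `P` (with `¬ P v`),
there is a *first* vertex `w` satisfying `P`: a path from `v` to `w`, inside the
original walk, all of whose vertices other than `w` fail `P`. -/
lemma first_on_walk {G : SimpleGraph V} (P : V → Prop) :
    ∀ {v u : V} (p : G.Walk v u), p.IsPath → ¬ P v → (∃ x ∈ p.support, P x) →
      ∃ (w : V) (q : G.Walk v w), q.IsPath ∧ P w ∧ (∀ y ∈ q.support, y ≠ w → ¬ P y) ∧
        ∀ x ∈ q.support, x ∈ p.support := by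
  intro v u p
  induction p with
  | nil =>
      intro _ hv hex
      rcases hex with ⟨x, hx, hPx⟩
      simp only [SimpleGraph.Walk.support_nil, List.mem_singleton] at hx
      exact absurd (hx ▸ hPx) hv
  | @cons v w' u hadj p' ih =>
      intro hp hv hex
      have hp' : p'.IsPath := hp.of_cons
      have hvnot : v ∉ p'.support := by
        have := hp.support_nodup
        simp only [SimpleGraph.Walk.support_cons, List.nodup_cons] at this
        exact this.1
      by_cases hPw' : P w'
      · refine ⟨w', SimpleGraph.Walk.cons hadj SimpleGraph.Walk.nil, ?_, hPw', ?_, ?_⟩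
        · simp [SimpleGraph.Walk.isPath_def, hadj.ne]
        · intro y hy hyne
          simp only [SimpleGraph.Walk.support_cons, SimpleGraph.Walk.support_nil,
            List.mem_cons, List.not_mem_nil, or_false] at hy
          rcases hy with rfl | rfl
          · exact hv
          · exact absurd rfl hyne
        · intro x hx
          simp only [SimpleGraph.Walk.support_cons, SimpleGraph.Walk.support_nil,
            List.mem_cons, List.not_mem_nil, or_false] at hx
          rcases hx with rfl | rfl <;>
            simp [SimpleGraph.Walk.support_cons, SimpleGraph.Walk.start_mem_support]
      · have hex' : ∃ x ∈ p'.support, P x := by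
          rcases hex with ⟨x, hx, hPx⟩
          simp only [SimpleGraph.Walk.support_cons, List.mem_cons] at hx
          rcases hx with rfl | hx
          · exact absurd hPx hv
          · exact ⟨x, hx, hPx⟩
        rcases ih hp' hPw' hex' with ⟨w, q, hq, hPw, hqnot, hqsub⟩
        refine ⟨w, SimpleGraph.Walk.cons hadj q, ?_, hPw, ?_, ?_⟩
        · exact hq.cons (fun hvq => hvnot (hqsub v hvq))
        · intro y hy hyne
          simp only [SimpleGraph.Walk.support_cons, List.mem_cons] at hy
          rcases hy with rfl | hy
          · exact hv
          · exact hqnot y hy hyne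
        · intro x hx
          simp only [SimpleGraph.Walk.support_cons, List.mem_cons] at hx ⊢
          rcases hx with rfl | hx
          · exact Or.inl rfl
          · exact Or.inr (hqsub x hx)

end FirstOnWalk

/-- Let `f` be an extended strategy function for a tree `T = (V,E,ω)`
with rounded cost function and `|f(u)| = ω(u)` for every vertex `u`. Let `v` be an
unaligned vertex with `f(v)` minimal (smallest left endpoint) among the intervals of all
unaligned vertices; write `ω(v) = 2^k`, `f(v) = [x_v, y_v)`, and let `a ∈ ℕ` satisfy
`a·2^k < x_v < (a+1)·2^k`. Then for each vertex `u ∈ N(v)` with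
`f(u) ∩ [a·2^k, x_v) ≠ ∅`, it holds that `f(u) ⊆ [a·2^k, x_v)`. -/
theorem stmt13 {V : Type u} (G : SimpleGraph V) (hG : G.IsTree)
    (ω : V → ℝ) (hround : ∀ v, ∃ k : ℕ, ω v = 2 ^ k)
    (f : V → HInterval) (hf : IsESF G ω f) (hlen : ∀ u, ((f u).len : ℝ) = ω u)
    (v : V) (hunal : ¬ AlignedAt ω f v)
    (hminimal : ∀ u, ¬ AlignedAt ω f u → (f v).a ≤ (f u).a)
    (k : ℕ) (hk : ω v = 2 ^ k)
    (a : ℕ) (ha₁ : a * 2 ^ k < (f v).a) (ha₂ : (f v).a < (a + 1) * 2 ^ k) :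
    ∀ u, InScrNbhd G f v u →
      ((f u).toSet ∩ Set.Ico (a * 2 ^ k) (f v).a).Nonempty →
      (f u).toSet ⊆ Set.Ico (a * 2 ^ k) (f v).a := by
  
  intro u hscr hne
  classical
  -- basic facts
  obtain ⟨t, htu, hta, htv⟩ : ∃ t, t ∈ (f u).toSet ∧ a * 2 ^ k ≤ t ∧ t < (f v).a := by
    rcases hne with ⟨t, ht1, ht2⟩; exact ⟨t, ht1, ht2.1, ht2.2⟩
  have htu' : (f u).a ≤ t ∧ t < (f u).b := htu
  have huv : u ≠ v := by
    rintro rfl; omega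
  -- u is aligned
  have hual : AlignedAt ω f u := by
    by_contra h
    have := hminimal u h
    omega
  obtain ⟨j, hj⟩ := hround u
  obtain ⟨m, hm⟩ := hual.1
  have hm' : (f u).a = m * 2 ^ j := by
    have : ((f u).a : ℝ) = ((m * 2 ^ j : ℕ) : ℝ) := by push_cast; rw [hm, hj]
    exact_mod_cast this
  have hlenu : (f u).len = 2 ^ j := by
    have : (((f u).len : ℕ) : ℝ) = ((2 ^ j : ℕ) : ℝ) := by push_cast; rw [hlen u, hj]
    exact_mod_cast this
  have hbu : (f u).b = m * 2 ^ j + 2 ^ j := by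
    have h1 := (f u).hab
    have h2 : (f u).len = (f u).b - (f u).a := rfl
    omega
  -- rule out the first two cases of `InScrNbhd`
  have hnotscr : ¬ Screens G f v u := by
    intro hs
    obtain ⟨p, hp, -⟩ := hG.existsUnique_path v u
    have := (hs p hp u (SimpleGraph.Walk.end_mem_support p)).2 rfl
    unfold HInterval.Lt at this
    have := (f v).hab
    omega
  have hcase3 : ∀ p : G.Walk u v, p.IsPath → ∀ x ∈ p.support, ¬ Screens G f v x := by
    rcases hscr with rfl | hs | h3
    · exact absurd rfl huv
    · exact absurd hs hnotscr
    · exact h3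
  -- no overlap with f v :  (f u).b ≤ (f v).a
  have hnov : (f u).b ≤ (f v).a := by
    by_contra hov
    push_neg at hov
    have hmem : ((f v).a : ℕ) ∈ (f v).toSet ∩ (f u).toSet := by
      constructor
      · exact ⟨le_refl _, (f v).hab⟩
      · exact ⟨by omega, hov⟩
    obtain ⟨p, hp, -⟩ := hG.existsUnique_path v u
    obtain ⟨v₃, hv₃mem, hv₃gt⟩ := hf.2 v u huv.symm ⟨(f v).a, hmem⟩ p hp
    -- there is a vertex on p whose interval lies above f v
    have hex : ∃ x ∈ p.support, (f v).Lt (f x) := ⟨v₃, hv₃mem, hv₃gt.1⟩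
    have hnv : ¬ (f v).Lt (f v) := by
      unfold HInterval.Lt; have := (f v).hab; omega
    obtain ⟨w, q, hq, hPw, hqnot, hqsub⟩ :=
      first_on_walk (fun x => (f v).Lt (f x)) p hp hnv hex
    -- w screens v
    have hscreens : Screens G f v w := by
      intro r hr x hx
      have hrq : r = q := by
        obtain ⟨p₀, -, huniq⟩ := hG.existsUnique_path v w
        rw [huniq r hr, huniq q hq]
      subst hrq
      constructor
      · intro hlt
        by_contra hxw
        exact hqnot x hx hxw hlt
      · rintro rfl; exact hPw
    -- contradiction with case 3
    have hwmem : w ∈ p.reverse.support := by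
      rw [SimpleGraph.Walk.support_reverse, List.mem_reverse]
      exact hqsub w (SimpleGraph.Walk.end_mem_support q)
    exact hcase3 p.reverse hp.reverse w hwmem hscreens
  -- arithmetic
  by_cases hjk : j ≤ k
  · -- left endpoint of f u is at least a * 2^k
    have hleft : a * 2 ^ k ≤ (f u).a := by
      by_contra hlt
      push_neg at hlt
      have h2k : 2 ^ k = 2 ^ (k - j) * 2 ^ j := by
        rw [← pow_add]; congr 1; omega
      rw [hm', h2k, ← mul_assoc] at hlt
      have hmlt : m < a * 2 ^ (k - j) := Nat.lt_of_mul_lt_mul_right hlt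
      have hb : (f u).b ≤ a * 2 ^ k := by
        rw [hbu, h2k, ← mul_assoc]
        calc m * 2 ^ j + 2 ^ j = (m + 1) * 2 ^ j := by ring
          _ ≤ a * 2 ^ (k - j) * 2 ^ j :=
            Nat.mul_le_mul (Nat.succ_le_of_lt hmlt) (le_refl _)
      exact lt_irrefl t (lt_of_lt_of_le htu'.2 (hb.trans hta))
    intro x hx
    exact ⟨le_trans hleft hx.1, lt_of_lt_of_le hx.2 hnov⟩
  · -- j > k : impossible
    exfalso
    push_neg at hjk
    have h2j : 2 ^ j = 2 ^ (j - k) * 2 ^ k := by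
      rw [← pow_add]; congr 1; omega
    set c := (m + 1) * 2 ^ (j - k) with hc
    have hbc : (f u).b = c * 2 ^ k := by
      rw [hbu, h2j]; ring
    have h1 : a * 2 ^ k < c * 2 ^ k := hbc ▸ lt_of_le_of_lt hta htu'.2
    have h2 : c * 2 ^ k < (a + 1) * 2 ^ k := hbc ▸ lt_of_le_of_lt hnov ha₂
    have ha' : a < c := Nat.lt_of_mul_lt_mul_right h1
    have hc' : c < a + 1 := Nat.lt_of_mul_lt_mul_right h2
    omega
end

section
/- For every tree T=(V,E,ω) with a down-monotonic and rounded cost function, there exists an optimal extended strategy function for (T,ω) that is aligned. -/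
/-!
Write `opt A` for the optimal makespan on a subtree `A` and `M(A, u)` for the largest `opt` of a
component of `A - u`. Putting `[M(A, u), M(A, u) + ω u)` on top of optimal strategies of the
components gives `opt A ≤ M(A, u) + ω u`, with equality for the vertex whose interval ends last in
an optimal strategy. If some `u` attains equality with `ω u ∣ M(A, u)`, this construction, applied
recursively, is optimal and aligned.

Such a `u` exists, by induction on `A`. Let `u` attain equality with `ω u ∤ M(A, u)`. Costs only
grow away from the root, so a component of `A - u` lying beyond `u` has all its costs, and hence
its `opt`, divisible by `ω u`; thus the component `C₀` realising `M(A, u)` reaches towards the root.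
By induction `C₀` has a good vertex `u₁`, so `M(A, u) = M(C₀, u₁) + ω u₁` is a multiple of `ω u₁`,
and `ω u₁ < ω u`. Every component `D` of `A - u₁` has `opt D ≤ M(A, u) + ω u - ω u₁`: if `u ∉ D`,
then `D` lies in a component of `C₀ - u₁`; if `u ∈ D`, each component of `D - u` either lies in one
of `C₀ - u₁` or lies beyond `u`, and then its `opt` is a multiple of `ω u` below `M(A, u)`, hence at
most `M(A, u) - ω u₁`. So `u₁` attains equality too, and `ω u₁ ∣ M(A, u₁)`.
-/

universe u

variable {V : Type u}

theorem HInterval.toSet_inter_nonempty_iff {I J : HInterval} :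
    (I.toSet ∩ J.toSet).Nonempty ↔ J.a < I.b ∧ I.a < J.b := by
  have := I.hab; have := J.hab
  simp only [HInterval.toSet, Set.Ico_inter_Ico, Set.nonempty_Ico, sup_lt_iff, lt_inf_iff]
  omega

open SimpleGraph

section TreePaths

variable {G : SimpleGraph V} {x y z m : V}

theorem onPath_left (x y : V) : OnPath G x y x := fun p _ => p.start_mem_support

theorem onPath_right (x y : V) : OnPath G x y y := fun p _ => p.end_mem_support

theorem OnPath.symm (h : OnPath G x y z) : OnPath G y x z := fun p hp => by
  simpa using h p.reverse hp.reverse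

theorem onPath_self_iff : OnPath G x x z ↔ z = x :=
  ⟨fun h => by simpa using h .nil .nil, by rintro rfl; exact onPath_left _ _⟩

theorem onPath_iff_mem_support (hG : G.IsAcyclic) {p : G.Walk x y} (hp : p.IsPath) :
    OnPath G x y z ↔ z ∈ p.support :=
  ⟨fun h => h p hp, fun hz q hq => by
    rwa [Subtype.mk.inj ((hG.subsingleton_path x y).elim ⟨q, hq⟩ ⟨p, hp⟩)]⟩

theorem onPath_triangle (hG : G.IsTree) (m : V) (h : OnPath G x y z) :
    OnPath G x m z ∨ OnPath G m y z := by
  classical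
  obtain ⟨p, hp⟩ := hG.connected.exists_isPath x m
  obtain ⟨q, hq⟩ := hG.connected.exists_isPath m y
  rw [onPath_iff_mem_support hG.isAcyclic hp, onPath_iff_mem_support hG.isAcyclic hq,
    ← Walk.mem_support_append_iff]
  exact (p.append q).support_bypass_subset_support (h _ (p.append q).bypass_isPath)

theorem OnPath.trans (hG : G.IsTree) (hm : OnPath G x y m) (hz : OnPath G x m z) :
    OnPath G x y z := by
  obtain ⟨p, hp⟩ := hG.connected.exists_isPath x y
  obtain ⟨q, r, hq, -, rfl⟩ := hp.mem_support_iff_exists_append.mp (hm _ hp)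
  rw [onPath_iff_mem_support hG.isAcyclic hp, Walk.mem_support_append_iff]
  exact .inl (hz q hq)

theorem eq_of_onPath_of_onPath (hG : G.IsTree) (h₁ : OnPath G x y m) (h₂ : OnPath G m y x) :
    x = m := by
  obtain ⟨p, hp⟩ := hG.connected.exists_isPath x y
  obtain ⟨q, r, -, hr, rfl⟩ := hp.mem_support_iff_exists_append.mp (h₁ _ hp)
  by_contra hne
  exact hp.ne_of_mem_support_of_append hne q.start_mem_support (h₂ r hr) rfl

end TreePaths

section Branches

variable {G : SimpleGraph V} {A B : Finset V} {u x y z a : V}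

/-- For trees, the path-closed finite vertex sets are exactly the vertex sets of subtrees. -/
def IsPathClosed (G : SimpleGraph V) (A : Finset V) : Prop :=
  ∀ x ∈ A, ∀ y ∈ A, ∀ z, OnPath G x y z → z ∈ A

theorem IsPathClosed.support_subset (hG : G.IsAcyclic) (hA : IsPathClosed G A) (hx : x ∈ A)
    (hy : y ∈ A) {p : G.Walk x y} (hp : p.IsPath) : ∀ z ∈ p.support, z ∈ A :=
  fun z hz => hA x hx y hy z ((onPath_iff_mem_support hG hp).2 hz)

open Classical in
/-- For path-closed `A` and `x ∈ A`, the component of `A - u` containing `x`; empty if `x = u`. -/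
noncomputable def branch (G : SimpleGraph V) (A : Finset V) (u x : V) : Finset V :=
  A.filter fun y => ¬ OnPath G x y u

theorem mem_branch : y ∈ branch G A u x ↔ y ∈ A ∧ ¬ OnPath G x y u := by
  classical exact Finset.mem_filter

theorem branch_subset : branch G A u x ⊆ A := fun _ hy => (mem_branch.1 hy).1

theorem branch_mono (hBA : B ⊆ A) : branch G B u x ⊆ branch G A u x :=
  fun _ hy => mem_branch.2 ⟨hBA (mem_branch.1 hy).1, (mem_branch.1 hy).2⟩

theorem not_mem_branch : u ∉ branch G A u x := fun h => (mem_branch.1 h).2 (onPath_right x u)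

theorem branch_self : branch G A u u = ∅ :=
  Finset.eq_empty_of_forall_notMem fun _ h => (mem_branch.1 h).2 (onPath_left u _)

theorem mem_branch_self (hx : x ∈ A) (hxu : x ≠ u) : x ∈ branch G A u x :=
  mem_branch.2 ⟨hx, fun h => hxu (onPath_self_iff.1 h).symm⟩

theorem branch_ssubset (hu : u ∈ A) : branch G A u x ⊂ A :=
  Finset.ssubset_iff_of_subset branch_subset |>.2 ⟨u, hu, not_mem_branch⟩

theorem not_onPath_of_mem_branch (hG : G.IsTree) (hy : y ∈ branch G A u x)
    (hz : z ∈ branch G A u x) : ¬ OnPath G y z u := fun h =>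
  (onPath_triangle hG x h).elim (fun h' => (mem_branch.1 hy).2 h'.symm) (mem_branch.1 hz).2

theorem branch_eq_of_mem (hG : G.IsTree) (hy : y ∈ branch G A u x) :
    branch G A u y = branch G A u x := by
  ext z
  refine ⟨fun hz => mem_branch.2 ⟨(mem_branch.1 hz).1, fun h => ?_⟩,
    fun hz => mem_branch.2 ⟨(mem_branch.1 hz).1, not_onPath_of_mem_branch hG hy hz⟩⟩
  exact (onPath_triangle hG y h).elim (mem_branch.1 hy).2 (mem_branch.1 hz).2

theorem IsPathClosed.branch (hG : G.IsTree) (hA : IsPathClosed G A) :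
    IsPathClosed G (branch G A u x) := by
  intro y hy z hz w hw
  refine mem_branch.2 ⟨hA y (branch_subset hy) z (branch_subset hz) w hw, fun h => ?_⟩
  rcases onPath_triangle hG y h with h | h
  · exact (mem_branch.1 hy).2 h
  · exact not_onPath_of_mem_branch hG hy hz (hw.trans hG h)

theorem subset_branch (hB : IsPathClosed G B) (hBA : B ⊆ A) (huB : u ∉ B) (hx : x ∈ B) :
    B ⊆ branch G A u x :=
  fun z hz => mem_branch.2 ⟨hBA hz, fun h => huB (hB x hx z hz u h)⟩

theorem onPath_of_mem_branch (hG : G.IsTree) (hy : y ∈ branch G A u x) (h : OnPath G a x u) :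
    OnPath G a y u :=
  (onPath_triangle hG y h).resolve_right fun h' => (mem_branch.1 hy).2 h'.symm

end Branches

section Strategies

variable {G : SimpleGraph V} {w : V → ℕ} {ω : V → ℝ} {A B : Finset V} {f : V → HInterval}

theorem IsESFOn.mono {A B : Set V} (hf : IsESFOn G ω f A) (hBA : B ⊆ A) : IsESFOn G ω f B :=
  ⟨fun v hv => hf.1 v (hBA hv), fun v₁ h₁ v₂ h₂ hne hI p hp hpB =>
    hf.2 v₁ (hBA h₁) v₂ (hBA h₂) hne hI p hp fun x hx => hBA (hpB x hx)⟩

theorem IsESFOn.add_le (hf : IsESFOn G (fun v => (w v : ℝ)) f A) {v : V} (hv : v ∈ A) :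
    (f v).a + w v ≤ (f v).b := by
  have hlen : w v ≤ (f v).len := Nat.cast_le.mp (hf.1 v hv)
  have := (f v).hab
  rw [HInterval.len] at hlen
  omega

theorem isESFOn_univ_iff [Fintype V] : IsESFOn G ω f ↑(Finset.univ : Finset V) ↔ IsESF G ω f := by
  simp [IsESFOn, IsESF]

noncomputable def supEndOn (A : Finset V) (f : V → HInterval) : ℕ :=
  A.sup fun v => (f v).b

theorem le_supEndOn {v : V} (hv : v ∈ A) : (f v).b ≤ supEndOn A f :=
  Finset.le_sup (f := fun v => (f v).b) hv

theorem exists_isESFOn (w : V → ℕ) (A : Finset V) : ∃ f, IsESFOn G (fun v => (w v : ℝ)) f A := by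
  classical
  set N := A.sup w + 1
  let idx (v : V) : ℕ := A.toList.idxOf v
  refine ⟨fun v => ⟨N * idx v, N * idx v + N, by omega⟩, fun v hv => ?_,
    fun v₁ h₁ v₂ h₂ hne hI => ?_⟩
  · have : w v ≤ N := Nat.le_succ_of_le (Finset.le_sup (f := w) hv)
    simpa [HInterval.len] using this
  · rw [HInterval.toSet_inter_nonempty_iff] at hI
    have hidx : idx v₁ ≠ idx v₂ := fun h =>
      hne ((List.idxOf_inj (Finset.mem_toList.2 h₁)).1 h)
    have h₁₂ : idx v₂ < idx v₁ + 1 := Nat.lt_of_mul_lt_mul_left (a := N) (by linarith [hI.1])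
    have h₂₁ : idx v₁ < idx v₂ + 1 := Nat.lt_of_mul_lt_mul_left (a := N) (by linarith [hI.2])
    omega

noncomputable def optOn (G : SimpleGraph V) (w : V → ℕ) (A : Finset V) : ℕ :=
  sInf {n | ∃ f, IsESFOn G (fun v => (w v : ℝ)) f A ∧ supEndOn A f = n}

theorem optOn_le (hf : IsESFOn G (fun v => (w v : ℝ)) f A) : optOn G w A ≤ supEndOn A f :=
  Nat.sInf_le ⟨f, hf, rfl⟩

theorem exists_supEndOn_eq_optOn (G : SimpleGraph V) (w : V → ℕ) (A : Finset V) :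
    ∃ f, IsESFOn G (fun v => (w v : ℝ)) f A ∧ supEndOn A f = optOn G w A :=
    let ⟨f, hf⟩ := exists_isESFOn (G := G) w A
  Nat.sInf_mem (s := {n | ∃ f, IsESFOn G (fun v => (w v : ℝ)) f A ∧ supEndOn A f = n})
    ⟨_, f, hf, rfl⟩

theorem optOn_empty : optOn G w ∅ = 0 := by
  obtain ⟨f, hf⟩ := exists_isESFOn (G := G) w ∅
  simpa [supEndOn] using optOn_le hf

theorem optOn_mono (hBA : B ⊆ A) : optOn G w B ≤ optOn G w A := by
  obtain ⟨f, hf, hopt⟩ := exists_supEndOn_eq_optOn G w A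
  exact (optOn_le (hf.mono (Finset.coe_subset.2 hBA))).trans
    (hopt ▸ Finset.sup_mono hBA)

end Strategies

section Recursion

variable {G : SimpleGraph V} {w : V → ℕ} {A : Finset V} {u x v : V} {f : V → HInterval}

noncomputable def maxBranchOpt (G : SimpleGraph V) (w : V → ℕ) (A : Finset V) (u : V) : ℕ :=
  A.sup fun x => optOn G w (branch G A u x)

theorem optOn_branch_le_maxBranchOpt (hx : x ∈ A) :
    optOn G w (branch G A u x) ≤ maxBranchOpt G w A u :=
  Finset.le_sup (f := fun x => optOn G w (branch G A u x)) hx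

theorem maxBranchOpt_le {c : ℕ} (h : ∀ x ∈ A, optOn G w (branch G A u x) ≤ c) :
    maxBranchOpt G w A u ≤ c :=
  Finset.sup_le h

open Classical in
noncomputable def glue (G : SimpleGraph V) (A : Finset V) (u : V) (I : HInterval)
    (F : Finset V → V → HInterval) : V → HInterval :=
  Function.update (fun v => F (branch G A u v) v) u I

variable {I : HInterval} {F : Finset V → V → HInterval}

theorem glue_self : glue G A u I F u = I := by
  classical exact Function.update_self ..

theorem glue_eq_of_mem_branch (hG : G.IsTree) (hv : v ∈ branch G A u x) :
    glue G A u I F v = F (branch G A u x) v := by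
  classical
  have hvu : v ≠ u := fun h => not_mem_branch (h ▸ hv)
  rw [glue, Function.update_of_ne hvu, branch_eq_of_mem hG hv]

theorem glue_b_le (hG : G.IsTree)
    (hFI : ∀ x ∈ A, supEndOn (branch G A u x) (F (branch G A u x)) ≤ I.a)
    (hv : v ∈ A) (hvu : v ≠ u) : (glue G A u I F v).b ≤ I.a := by
  have hvB := mem_branch_self (G := G) hv hvu
  rw [glue_eq_of_mem_branch hG hvB]
  exact (le_supEndOn hvB).trans (hFI v hv)

theorem isESFOn_glue (hG : G.IsTree) (hI : w u ≤ I.len)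
    (hF : ∀ x ∈ A, IsESFOn G (fun v => (w v : ℝ)) (F (branch G A u x)) (branch G A u x))
    (hFI : ∀ x ∈ A, supEndOn (branch G A u x) (F (branch G A u x)) ≤ I.a) :
    IsESFOn G (fun v => (w v : ℝ)) (glue G A u I F) A := by
  refine ⟨fun v hv => ?_, fun v₁ h₁ v₂ h₂ hne hI₁₂ p hp hpA => ?_⟩
  · by_cases hvu : v = u
    · subst hvu
      rw [glue_self]
      exact Nat.cast_le.mpr hI
    · have hvB := mem_branch_self (G := G) hv hvu
      rw [glue_eq_of_mem_branch hG hvB]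
      exact (hF v hv).1 v hvB
  have hdisj : ∀ v ∈ A, v ≠ u → ¬ ((glue G A u I F v).toSet ∩ I.toSet).Nonempty := by
    intro v hv hvu h
    have := glue_b_le hG hFI hv hvu
    rw [HInterval.toSet_inter_nonempty_iff] at h
    omega
  have h₁u : v₁ ≠ u := by
    rintro rfl
    exact hdisj v₂ h₂ hne.symm (by rwa [glue_self, Set.inter_comm] at hI₁₂)
  have h₂u : v₂ ≠ u := by
    rintro rfl
    exact hdisj v₁ h₁ hne (by rwa [glue_self] at hI₁₂)
  by_cases hup : u ∈ p.support
  · exact ⟨u, hup, by rw [glue_self]; exact ⟨glue_b_le hG hFI h₁ h₁u, glue_b_le hG hFI h₂ h₂u⟩⟩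
  have hpB : ∀ z ∈ p.support, z ∈ branch G A u v₁ := fun z hz =>
    mem_branch.2 ⟨hpA z hz, fun h =>
      hup (((onPath_iff_mem_support hG.isAcyclic hp).2 hz).trans hG h p hp)⟩
  have hv₁ := hpB v₁ p.start_mem_support
  have hv₂ := hpB v₂ p.end_mem_support
  rw [glue_eq_of_mem_branch hG hv₁, glue_eq_of_mem_branch hG hv₂] at hI₁₂
  obtain ⟨v₃, hv₃, hgt⟩ := (hF v₁ h₁).2 v₁ hv₁ v₂ hv₂ hne hI₁₂ p hp hpB
  refine ⟨v₃, hv₃, ?_⟩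
  rwa [glue_eq_of_mem_branch hG hv₁, glue_eq_of_mem_branch hG hv₂,
    glue_eq_of_mem_branch hG (hpB v₃ hv₃)]

theorem supEndOn_glue (hG : G.IsTree) (hu : u ∈ A)
    (hFI : ∀ x ∈ A, supEndOn (branch G A u x) (F (branch G A u x)) ≤ I.a) :
    supEndOn A (glue G A u I F) = I.b := by
  refine le_antisymm (Finset.sup_le fun v hv => ?_) (by simpa only [glue_self] using le_supEndOn (f := glue G A u I F) hu)
  by_cases hvu : v = u
  · rw [hvu, glue_self]
  · exact (glue_b_le hG hFI hv hvu).trans I.hab.le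

theorem optOn_le_maxBranchOpt_add (hG : G.IsTree) (hu : u ∈ A) (hw : 0 < w u) :
    optOn G w A ≤ maxBranchOpt G w A u + w u := by
  choose F hF hopt using exists_supEndOn_eq_optOn G w
  let I : HInterval := ⟨maxBranchOpt G w A u, maxBranchOpt G w A u + w u, by omega⟩
  have hFI : ∀ x ∈ A, supEndOn (branch G A u x) (F (branch G A u x)) ≤ I.a := fun x hx =>
    (hopt _).trans_le (optOn_branch_le_maxBranchOpt hx)
  calc optOn G w A ≤ supEndOn A (glue G A u I F) :=
        optOn_le (isESFOn_glue hG (by simp [I, HInterval.len]) (fun x _ => hF _) hFI)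
    _ = maxBranchOpt G w A u + w u := supEndOn_glue hG hu hFI

/-- Otherwise some interval on the path from `v` to `u` would lie above `f u`. -/
theorem IsESFOn.b_le_a_of_top (hG : G.IsTree) (hA : IsPathClosed G A)
    (hf : IsESFOn G (fun v => (w v : ℝ)) f A) (hu : u ∈ A) (htop : ∀ x ∈ A, (f x).b ≤ (f u).b)
    (hv : v ∈ A) (hvu : v ≠ u) : (f v).b ≤ (f u).a := by
  by_contra hlt
  obtain ⟨p, hp⟩ := hG.connected.exists_isPath v u
  have hI : ((f v).toSet ∩ (f u).toSet).Nonempty := by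
    have := htop v hv; have := (f v).hab
    rw [HInterval.toSet_inter_nonempty_iff]
    omega
  obtain ⟨x, hx, -, hgt⟩ :=
    hf.2 v hv u hu hvu hI p hp (hA.support_subset hG.isAcyclic hv hu hp)
  have := htop x (hA.support_subset hG.isAcyclic hv hu hp x hx)
  have := (f x).hab
  omega

theorem maxBranchOpt_add_le_supEndOn (hG : G.IsTree) (hA : IsPathClosed G A)
    (hf : IsESFOn G (fun v => (w v : ℝ)) f A) (hu : u ∈ A) (htop : ∀ x ∈ A, (f x).b ≤ (f u).b) :
    maxBranchOpt G w A u + w u ≤ supEndOn A f := by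
  have hbranch : ∀ x ∈ A, optOn G w (branch G A u x) ≤ (f u).a := fun x _ =>
    (optOn_le (hf.mono (Finset.coe_subset.2 branch_subset))).trans <|
      Finset.sup_le fun v hv => hf.b_le_a_of_top hG hA hu htop (branch_subset hv)
        fun h => not_mem_branch (h ▸ hv)
  have := hf.add_le hu
  have := le_supEndOn (f := f) hu
  have := maxBranchOpt_le hbranch
  omega

theorem exists_optOn_eq_maxBranchOpt_add (hG : G.IsTree) (hA : IsPathClosed G A)
    (hne : A.Nonempty) (hw : ∀ v, 0 < w v) :
    ∃ u ∈ A, optOn G w A = maxBranchOpt G w A u + w u := by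
  obtain ⟨f, hf, hopt⟩ := exists_supEndOn_eq_optOn G w A
  obtain ⟨u, hu, htop⟩ := A.exists_max_image (fun v => (f v).b) hne
  exact ⟨u, hu, le_antisymm (optOn_le_maxBranchOpt_add hG hu (hw u))
    (hopt ▸ maxBranchOpt_add_le_supEndOn hG hA hf hu htop)⟩

theorem dvd_optOn (hG : G.IsTree) (hw : ∀ v, 0 < w v) {m : ℕ} (hA : IsPathClosed G A)
    (hm : ∀ v ∈ A, m ∣ w v) : m ∣ optOn G w A := by
  induction A using Finset.strongInduction with
  | H A ih =>
    rcases A.eq_empty_or_nonempty with rfl | hne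
    · simp [optOn_empty]
    obtain ⟨u, hu, hopt⟩ := exists_optOn_eq_maxBranchOpt_add hG hA hne hw
    refine hopt ▸ dvd_add (Finset.sup_induction (dvd_zero m) (fun a ha b hb => ?_)
      fun x _ => ih _ (branch_ssubset hu) (hA.branch hG) fun v hv => hm v (branch_subset hv))
      (hm u hu)
    rcases le_total a b with h | h
    · rwa [sup_of_le_right h]
    · rwa [sup_of_le_left h]

end Recursion

section PowersOfTwo

variable {G : SimpleGraph V} {w k : V → ℕ} {r : V} {A : Finset V} {u u₁ a x y : V}

theorem optOn_branch_le_of_center_not_mem (hG : G.IsTree) (hA : IsPathClosed G A) (hu : u ∈ A)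
    (hu₁ : u₁ ∈ branch G A u a) (hy : y ∈ branch G A u₁ y) (huy : u ∉ branch G A u₁ y) :
    optOn G w (branch G A u₁ y) ≤ maxBranchOpt G w (branch G A u a) u₁ := by
  have hyu : OnPath G y u u₁ := by_contra fun h => huy (mem_branch.2 ⟨hu, h⟩)
  have hyC : y ∈ branch G A u a := by
    refine mem_branch.2 ⟨branch_subset hy, fun h => ?_⟩
    rcases onPath_triangle hG u₁ h with h' | h'
    · exact (mem_branch.1 hu₁).2 h'
    · exact not_mem_branch (eq_of_onPath_of_onPath hG hyu.symm h' ▸ hu₁)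
  have hsub : branch G A u₁ y ⊆ branch G (branch G A u a) u₁ y := fun z hz =>
    mem_branch.2 ⟨branch_eq_of_mem hG hyC ▸ subset_branch (hA.branch hG) branch_subset huy hy hz,
      (mem_branch.1 hz).2⟩
  exact (optOn_mono hsub).trans (optOn_branch_le_maxBranchOpt hyC)

theorem optOn_branch_branch_add_le (hG : G.IsTree) (hA : IsPathClosed G A)
    (hmono : ∀ y z, OnPath G r y z → k z ≤ k y) (hr : ¬ OnPath G r a u)
    (hM : maxBranchOpt G (2 ^ k ·) A u = maxBranchOpt G (2 ^ k ·) (branch G A u a) u₁ + 2 ^ k u₁)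
    (hdvd₁ : 2 ^ k u₁ ∣ maxBranchOpt G (2 ^ k ·) A u) (hdvd : ¬ 2 ^ k u ∣ maxBranchOpt G (2 ^ k ·) A u)
    (hk : k u₁ ≤ k u) (hx : x ∈ branch G A u₁ y) :
    optOn G (2 ^ k ·) (branch G (branch G A u₁ y) u x) + 2 ^ k u₁ ≤ maxBranchOpt G (2 ^ k ·) A u := by
  have hxA := branch_subset hx
  by_cases hax : OnPath G a x u
  · have hsub : branch G (branch G A u₁ y) u x ⊆ branch G A u x := branch_mono branch_subset
    have hle := (optOn_mono (w := (2 ^ k ·)) hsub).trans (optOn_branch_le_maxBranchOpt hxA)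
    -- every vertex of this component lies beyond `u` as seen from the root
    have hdvdB : 2 ^ k u ∣ optOn G (2 ^ k ·) (branch G (branch G A u₁ y) u x) :=
      dvd_optOn hG (fun v => Nat.two_pow_pos (k v)) ((hA.branch hG).branch hG) fun v hv =>
        pow_dvd_pow 2 <| hmono v u <| (onPath_triangle hG r
          (onPath_of_mem_branch hG (hsub hv) hax)).resolve_left fun h => hr h.symm
    have hlt : optOn G (2 ^ k ·) (branch G (branch G A u₁ y) u x) < maxBranchOpt G (2 ^ k ·) A u :=
      hle.lt_of_ne fun h => hdvd (h ▸ hdvdB)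
    have := Nat.le_of_dvd (Nat.sub_pos_of_lt hlt)
      (Nat.dvd_sub hdvd₁ ((pow_dvd_pow 2 hk).trans hdvdB))
    omega
  · have hxC : x ∈ branch G A u a := mem_branch.2 ⟨hxA, hax⟩
    have hsub : branch G (branch G A u₁ y) u x ⊆ branch G (branch G A u a) u₁ x := fun z hz =>
      mem_branch.2 ⟨branch_eq_of_mem hG hxC ▸ branch_mono branch_subset hz,
        not_onPath_of_mem_branch hG hx (branch_subset hz)⟩
    have := (optOn_mono (w := (2 ^ k ·)) hsub).trans (optOn_branch_le_maxBranchOpt hxC)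
    omega

theorem maxBranchOpt_add_le_of_root_side (hG : G.IsTree) (hA : IsPathClosed G A)
    (hmono : ∀ y z, OnPath G r y z → k z ≤ k y) (hu : u ∈ A) (hr : ¬ OnPath G r a u)
    (hu₁ : u₁ ∈ branch G A u a)
    (hM : maxBranchOpt G (2 ^ k ·) A u = maxBranchOpt G (2 ^ k ·) (branch G A u a) u₁ + 2 ^ k u₁)
    (hdvd₁ : 2 ^ k u₁ ∣ maxBranchOpt G (2 ^ k ·) A u) (hdvd : ¬ 2 ^ k u ∣ maxBranchOpt G (2 ^ k ·) A u)
    (hk : k u₁ ≤ k u) :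
    maxBranchOpt G (2 ^ k ·) A u₁ + 2 ^ k u₁ ≤ maxBranchOpt G (2 ^ k ·) A u + 2 ^ k u := by
  have hpow : 2 ^ k u₁ ≤ 2 ^ k u := Nat.pow_le_pow_right two_pos hk
  suffices h : ∀ y ∈ A, optOn G (2 ^ k ·) (branch G A u₁ y) + 2 ^ k u₁ ≤
      maxBranchOpt G (2 ^ k ·) A u + 2 ^ k u by
    have := maxBranchOpt_le (G := G) (w := (2 ^ k ·)) (A := A) (u := u₁)
      (c := maxBranchOpt G (2 ^ k ·) A u + 2 ^ k u - 2 ^ k u₁) fun y hy => by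
        have := h y hy; omega
    omega
  intro y hy
  by_cases hyu₁ : y = u₁
  · rw [hyu₁, branch_self, optOn_empty]
    omega
  have hyD := mem_branch_self (G := G) hy hyu₁
  by_cases huD : u ∈ branch G A u₁ y
  · have := optOn_le_maxBranchOpt_add (w := (2 ^ k ·)) hG huD (Nat.two_pow_pos (k u))
    have := maxBranchOpt_le (G := G) (w := (2 ^ k ·)) (A := branch G A u₁ y) (u := u)
      (c := maxBranchOpt G (2 ^ k ·) A u - 2 ^ k u₁) fun x hx => by
        have := optOn_branch_branch_add_le hG hA hmono hr hM hdvd₁ hdvd hk hx; omega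
    omega
  · have := optOn_branch_le_of_center_not_mem (w := (2 ^ k ·)) hG hA hu hu₁ hyD huD
    omega

theorem exists_root_side_branch (hG : G.IsTree) (hA : IsPathClosed G A)
    (hmono : ∀ y z, OnPath G r y z → k z ≤ k y) (hu : u ∈ A)
    (hdvd : ¬ 2 ^ k u ∣ maxBranchOpt G (2 ^ k ·) A u) :
    ∃ a ∈ A, ¬ OnPath G r a u ∧
      maxBranchOpt G (2 ^ k ·) A u = optOn G (2 ^ k ·) (branch G A u a) := by
  obtain ⟨x, -, hx⟩ := A.exists_mem_eq_sup ⟨u, hu⟩ fun x => optOn G (2 ^ k ·) (branch G A u x)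
  change maxBranchOpt G (2 ^ k ·) A u = _ at hx
  by_cases hall : ∀ v ∈ branch G A u x, OnPath G r v u
  · refine absurd (hx ▸ dvd_optOn hG (fun v => Nat.two_pow_pos (k v)) (hA.branch hG) ?_) hdvd
    exact fun v hv => pow_dvd_pow 2 (hmono v u (hall v hv))
  push Not at hall
  obtain ⟨a, ha, hr⟩ := hall
  exact ⟨a, branch_subset ha, hr, by rw [branch_eq_of_mem hG ha, hx]⟩

theorem exists_aligned_top (hG : G.IsTree) (hmono : ∀ y z, OnPath G r y z → k z ≤ k y)
    (hA : IsPathClosed G A) (hne : A.Nonempty) :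
    ∃ u ∈ A, optOn G (2 ^ k ·) A = maxBranchOpt G (2 ^ k ·) A u + 2 ^ k u ∧
      2 ^ k u ∣ maxBranchOpt G (2 ^ k ·) A u := by
  induction A using Finset.strongInduction with
  | H A ih =>
  obtain ⟨u, hu, hopt⟩ :=
    exists_optOn_eq_maxBranchOpt_add hG hA hne fun v => Nat.two_pow_pos (k v)
  by_cases hdvd : 2 ^ k u ∣ maxBranchOpt G (2 ^ k ·) A u
  · exact ⟨u, hu, hopt, hdvd⟩
  obtain ⟨a, ha, hr, hMa⟩ := exists_root_side_branch hG hA hmono hu hdvd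
  have hau : a ≠ u := fun h => hr (h ▸ onPath_right r a)
  obtain ⟨u₁, hu₁, hopt₁, hdvd₁⟩ :=
    ih _ (branch_ssubset hu) (hA.branch hG) ⟨a, mem_branch_self ha hau⟩
  have hM := hMa.trans hopt₁
  have hdvdM : 2 ^ k u₁ ∣ maxBranchOpt G (2 ^ k ·) A u := hM ▸ dvd_add hdvd₁ dvd_rfl
  have hk : k u₁ ≤ k u := by
    by_contra h
    exact hdvd ((pow_dvd_pow 2 (by omega)).trans hdvdM)
  have hle := maxBranchOpt_add_le_of_root_side hG hA hmono hu hr hu₁ hM hdvdM hdvd hk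
  have := optOn_le_maxBranchOpt_add (w := (2 ^ k ·)) hG (branch_subset hu₁)
    (Nat.two_pow_pos (k u₁))
  have heq : maxBranchOpt G (2 ^ k ·) A u₁ + 2 ^ k u₁ = maxBranchOpt G (2 ^ k ·) A u + 2 ^ k u := by
    omega
  refine ⟨u₁, branch_subset hu₁, by omega, Nat.dvd_add_self_right.1 ?_⟩
  rw [heq]
  exact dvd_add hdvdM (pow_dvd_pow 2 hk)

theorem exists_aligned_optimal (hG : G.IsTree) (hmono : ∀ y z, OnPath G r y z → k z ≤ k y)
    (hA : IsPathClosed G A) :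
    ∃ f, IsESFOn G (fun v => ((2 ^ k v : ℕ) : ℝ)) f A ∧
      (∀ v ∈ A, 2 ^ k v ∣ (f v).a ∧ 2 ^ k v ∣ (f v).b) ∧ supEndOn A f = optOn G (2 ^ k ·) A := by
  induction A using Finset.strongInduction with
  | H A ih =>
  rcases A.eq_empty_or_nonempty with rfl | hne
  · obtain ⟨f, hf, hopt⟩ := exists_supEndOn_eq_optOn G (2 ^ k ·) ∅
    exact ⟨f, hf, by simp, hopt⟩
  obtain ⟨u, hu, hopt, hdvd⟩ := exists_aligned_top hG hmono hA hne
  let I : HInterval := ⟨maxBranchOpt G (2 ^ k ·) A u, maxBranchOpt G (2 ^ k ·) A u + 2 ^ k u,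
    by have := Nat.two_pow_pos (k u); omega⟩
  have hF : ∀ B, ∃ g, B ⊂ A → IsPathClosed G B →
      IsESFOn G (fun v => ((2 ^ k v : ℕ) : ℝ)) g B ∧
      (∀ v ∈ B, 2 ^ k v ∣ (g v).a ∧ 2 ^ k v ∣ (g v).b) ∧ supEndOn B g = optOn G (2 ^ k ·) B := by
    intro B
    by_cases hB : B ⊂ A ∧ IsPathClosed G B
    · obtain ⟨g, hg⟩ := ih B hB.1 hB.2
      exact ⟨g, fun _ _ => hg⟩
    · exact ⟨fun _ => I, fun h₁ h₂ => absurd ⟨h₁, h₂⟩ hB⟩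
  choose F hF using hF
  have hFx (x : V) := hF (branch G A u x) (branch_ssubset hu) (hA.branch hG)
  have hFI : ∀ x ∈ A, supEndOn (branch G A u x) (F (branch G A u x)) ≤ I.a := fun x hx =>
    (hFx x).2.2.trans_le (optOn_branch_le_maxBranchOpt hx)
  refine ⟨glue G A u I F, isESFOn_glue hG (by simp [I, HInterval.len]) (fun x _ => (hFx x).1) hFI,
    fun v hv => ?_, (supEndOn_glue hG hu hFI).trans hopt.symm⟩
  by_cases hvu : v = u
  · rw [hvu, glue_self]
    exact ⟨hdvd, dvd_add hdvd dvd_rfl⟩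
  · have hvB := mem_branch_self (G := G) hv hvu
    rw [glue_eq_of_mem_branch hG hvB]
    exact (hFx v).2.1 v hvB

end PowersOfTwo

theorem alignedAt_of_dvd {w : V → ℕ} {f : V → HInterval} {v : V}
    (h : w v ∣ (f v).a ∧ w v ∣ (f v).b) : AlignedAt (fun v => (w v : ℝ)) f v := by
  obtain ⟨⟨c, hc⟩, ⟨d, hd⟩⟩ := h
  exact ⟨⟨c, by rw [hc]; push_cast; ring⟩, ⟨d, by rw [hd]; push_cast; ring⟩⟩

/-- For every tree `T = (V,E,ω)` with a down-monotonic and rounded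
cost function, there exists an optimal extended strategy function for `(T,ω)` that is
aligned. -/
theorem stmt14 {V : Type u} [Fintype V] (G : SimpleGraph V) (hG : G.IsTree)
    (ω : V → ℝ)
    (hdown : ∃ r : V, ∀ u v : V, OnPath G r u v → ω v ≤ ω u)
    (hround : ∀ v, ∃ k : ℕ, ω v = 2 ^ k) :
    ∃ f : V → HInterval, IsOptimalESF G ω f ∧ ∀ v, AlignedAt ω f v := by
  obtain ⟨r, hr⟩ := hdown
  choose k hk using hround
  obtain rfl : ω = fun v => ((2 ^ k v : ℕ) : ℝ) := funext fun v => by rw [hk]; push_cast; rfl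
  have hmono : ∀ y z, OnPath G r y z → k z ≤ k y := fun y z h =>
    (Nat.pow_le_pow_iff_right one_lt_two).1 (Nat.cast_le.1 (hr y z h))
  obtain ⟨f, hf, halign, hopt⟩ :=
    exists_aligned_optimal hG hmono (A := Finset.univ) fun _ _ _ _ z _ => Finset.mem_univ z
  refine ⟨f, ⟨isESFOn_univ_iff.1 hf, fun g hg => ?_⟩,
    fun v => alignedAt_of_dvd (halign v (Finset.mem_univ v))⟩
  calc supEnd f = optOn G (2 ^ k ·) Finset.univ := hopt
    _ ≤ supEnd g := optOn_le (isESFOn_univ_iff.2 hg)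
end

section
/- Let T=(V,E,ω) be a tree with an up-monotonic and rounded cost function, rooted as in the definition of up-monotonicity, and let f_opt be an optimal structured extended strategy function on V. Let L be a layer component of T with layer components L_1,…,L_k directly below L and let v_j be the root of L_j for 1 ≤ j ≤ k. Define f' on V by f'(u) = f_opt(u) for every vertex u that is a proper descendant of some v_j, and f'(u) = f_opt(u) + ω(L) for every other vertex u (including each v_j). Then f' is a structured extended strategy function on V. -/
universe u

variable {V : Type u}

/-- The layer component of `u`: the connected component containing `u` of the
subgraph of `G` induced by the vertices whose cost equals `ω u`. -/
def layerComp {V : Type u} (G : SimpleGraph V) (ω : V → ℝ) (u : V) : Set V :=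
  {w | ω w = ω u ∧ ∃ p : G.Walk u w, ∀ x ∈ p.support, ω x = ω u}

/-- `L` is a layer component of `(G, ω)`. -/
def IsLayerComp {V : Type u} (G : SimpleGraph V) (ω : V → ℝ) (L : Set V) : Prop :=
  ∃ u, L = layerComp G ω u

/-- `x` is the root of its layer component (w.r.t. the root `r` of the tree):
`x` is the vertex of its layer component closest to `r`, equivalently every vertex
of the layer component of `x` is a descendant of `x`. -/
def IsLayerRoot {V : Type u} (G : SimpleGraph V) (ω : V → ℝ) (r x : V) : Prop :=
  ∀ w ∈ layerComp G ω x, OnPath G r w x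

/-- The cost function `ω` is up-monotonic with respect to the root `r`: costs are
non-increasing along any path going away from `r`. -/
def UpMonotonicAt {V : Type u} (G : SimpleGraph V) (ω : V → ℝ) (r : V) : Prop :=
  ∀ u v : V, OnPath G r u v → ω u ≤ ω v

/-- The cost function `ω` is rounded: all its values are powers of two. -/
def Rounded {V : Type u} (ω : V → ℝ) : Prop := ∀ v, ∃ k : ℕ, ω v = 2 ^ k

/-- The extended strategy function `f` is structured: for every layer-component root
`x`, `f(x) > f(u)` for every vertex `u` of the subtree `T_x` other than `x`. -/
def StructuredESF {V : Type u} (G : SimpleGraph V) (ω : V → ℝ) (r : V)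
    (f : V → HInterval) : Prop :=
  ∀ x : V, IsLayerRoot G ω r x → ∀ u : V, OnPath G r u x → u ≠ x → (f u).Lt (f x)

/-- `u` is a proper descendant of the root `x` of some layer component directly below
`L` (i.e. the parent `px` of `x` belongs to `L`). -/
def ProperDescOfRootBelow {V : Type u} (G : SimpleGraph V) (ω : V → ℝ) (r : V)
    (L : Set V) (u : V) : Prop :=
  ∃ x : V, IsLayerRoot G ω r x ∧ (∃ px ∈ L, G.Adj px x ∧ OnPath G r x px) ∧
    OnPath G r u x ∧ u ≠ x

/-!
Let `D` be the set of proper descendants of the roots `v_j`. Shifting the interval of every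
vertex outside `D` by `c = ω(L)` keeps all comparisons between two vertices on the same side
of `D`. A conflict between a vertex `v ∈ D` below `v_j` and a vertex outside `D` is resolved
by `v_j` itself: `v_j ∉ D`, since otherwise its parent, of cost `c`, would descend from some
`v_i`, of cost `< c`; `f(v) < f(v_j)` because `f` is structured; and `v_j` separates `v` from
every vertex outside `D`.
-/

open SimpleGraph

variable {G : SimpleGraph V}

namespace HInterval

@[simp] lemma shift_a (I : HInterval) (c : ℕ) : (I.shift c).a = I.a + c := rfl

@[simp] lemma shift_b (I : HInterval) (c : ℕ) : (I.shift c).b = I.b + c := rfl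

@[simp] lemma len_shift (I : HInterval) (c : ℕ) : (I.shift c).len = I.len := by
  simp only [len, shift_a, shift_b]
  omega

lemma toSet_inter_nonempty_iff_s15 {I J : HInterval} :
    (I.toSet ∩ J.toSet).Nonempty ↔ I.a < J.b ∧ J.a < I.b := by
  simp only [toSet, Set.Ico_inter_Ico, Set.nonempty_Ico, max_lt_iff, lt_min_iff]
  have := I.hab
  have := J.hab
  omega

lemma GtUnion.symm {K I J : HInterval} (h : K.GtUnion I J) : K.GtUnion J I := ⟨h.2, h.1⟩

lemma GtUnion.trans_lt {K K' I J : HInterval} (h : K.GtUnion I J) (hK : K.Lt K') :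
    K'.GtUnion I J :=
  have := K.hab
  ⟨by unfold Lt at hK; have := h.1; omega, by unfold Lt at hK; have := h.2; omega⟩

end HInterval

lemma SimpleGraph.IsAcyclic.eq_of_isPath (hG : G.IsAcyclic) {v w : V} {p q : G.Walk v w}
    (hp : p.IsPath) (hq : q.IsPath) : p = q :=
  Subtype.mk.inj <| (hG.subsingleton_path v w).elim ⟨p, hp⟩ ⟨q, hq⟩

namespace OnPath

variable {r u v x y : V}

lemma trans_s15 (hux : OnPath G r u x) (hxy : OnPath G r x y) : OnPath G r u y := by
  classical
  intro p hp
  exact p.support_takeUntil_subset_support _ (hxy _ (hp.takeUntil (hux p hp)))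

lemma antisymm (hG : G.IsTree) (huv : OnPath G r u v) (hvu : OnPath G r v u) : u = v := by
  classical
  obtain ⟨p, hp, -⟩ := hG.existsUnique_path r u
  have hv := huv p hp
  have hu : u ∈ (p.takeUntil v hv).support := hvu _ (hp.takeUntil hv)
  -- `p` is the prefix of `p.takeUntil v` up to `u`, so nothing of `p` remains after `v`
  have hprefix : (p.takeUntil v hv).takeUntil u hu = p :=
    hG.isAcyclic.eq_of_isPath ((hp.takeUntil hv).takeUntil hu) hp
  have hle := (p.takeUntil v hv).length_takeUntil_le_length hu
  have hsplit := congrArg Walk.length (p.take_spec hv)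
  rw [hprefix] at hle
  rw [Walk.length_append] at hsplit
  exact (Walk.eq_of_length_eq_zero (p := p.dropUntil v hv) (by omega)).symm

lemma to_parent (hG : G.IsTree) {px : V} (hadj : G.Adj px x) (hpx : OnPath G r x px)
    (hy : OnPath G r x y) (hyx : y ≠ x) : OnPath G r px y := by
  obtain ⟨q, hq, -⟩ := hG.existsUnique_path r x
  obtain ⟨p, hp, -⟩ := hG.existsUnique_path r px
  have hqp : q = p.concat hadj := hG.isAcyclic.path_concat hp hq hadj (hpx q hq)
  have hyp : y ∈ p.support := by
    simpa [hqp, hyx] using hy q hq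
  exact fun p' hp' => hG.isAcyclic.eq_of_isPath hp' hp ▸ hyp

lemma mem_support_of_not_onPath {w : V} (hv : OnPath G r v x) (hw : ¬ OnPath G r w x)
    (s : G.Walk v w) : x ∈ s.support := by
  classical
  obtain ⟨q, -, hxq⟩ : ∃ q : G.Walk r w, q.IsPath ∧ x ∉ q.support := by
    simpa [OnPath] using hw
  have hx := (q.append s.reverse).support_bypass_subset_support
    (hv _ (q.append s.reverse).bypass_isPath)
  rw [Walk.mem_support_append_iff, Walk.support_reverse, List.mem_reverse] at hx
  exact hx.resolve_left hxq

end OnPath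

def IsGuarded (G : SimpleGraph V) (f : V → HInterval) (S : Set V) : Prop :=
  ∀ v ∈ S, ∃ x ∉ S, (f v).Lt (f x) ∧ ∀ w ∉ S, ∀ p : G.Walk v w, x ∈ p.support

lemma IsGuarded.exists_mem_support {f : V → HInterval} {S : Set V} (hS : IsGuarded G f S)
    {v₁ v₂ v : V} (p : G.Walk v₁ v₂) (hv : v ∈ p.support) (hvS : v ∈ S)
    (hend : v₁ ∉ S ∨ v₂ ∉ S) : ∃ x ∈ p.support, x ∉ S ∧ (f v).Lt (f x) := by
  classical
  obtain ⟨x, hxS, hlt, hsep⟩ := hS v hvS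
  refine ⟨x, ?_, hxS, hlt⟩
  rcases hend with h₁ | h₂
  · have hx := hsep v₁ h₁ (p.takeUntil v hv).reverse
    rw [Walk.support_reverse, List.mem_reverse] at hx
    exact p.support_takeUntil_subset_support hv hx
  · exact p.support_dropUntil_subset_support hv (hsep v₂ h₂ _)

section ShiftCompl

variable {ω : V → ℝ} {f f' : V → HInterval} {S : Set V} {c : ℕ}

lemma b_le_of_shift_compl (hin : ∀ u ∈ S, f' u = f u)
    (hout : ∀ u ∉ S, f' u = (f u).shift c) (u : V) : (f' u).b ≤ (f u).b + c := by
  by_cases hu : u ∈ S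
  · rw [hin u hu]
    omega
  · rw [hout u hu, HInterval.shift_b]

lemma gtUnion_of_shift_compl (hin : ∀ u ∈ S, f' u = f u)
    (hout : ∀ u ∉ S, f' u = (f u).shift c) {v₁ v₂ w : V} (hw : w ∉ S)
    (h : (f w).GtUnion (f v₁) (f v₂)) : (f' w).GtUnion (f' v₁) (f' v₂) := by
  have h₁ := b_le_of_shift_compl hin hout v₁
  have h₂ := b_le_of_shift_compl hin hout v₂
  rw [hout w hw]
  exact ⟨by simp only [HInterval.shift_a]; have := h.1; omega,
    by simp only [HInterval.shift_a]; have := h.2; omega⟩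

lemma exists_gtUnion_of_shift_compl (hf : IsESF G ω f) (hS : IsGuarded G f S)
    (hin : ∀ u ∈ S, f' u = f u) (hout : ∀ u ∉ S, f' u = (f u).shift c)
    {v₁ v₂ : V} (h₂ : v₂ ∉ S) (hne : v₁ ≠ v₂)
    (hint : ((f' v₁).toSet ∩ (f' v₂).toSet).Nonempty) (p : G.Walk v₁ v₂) (hp : p.IsPath) :
    ∃ v₃ ∈ p.support, (f' v₃).GtUnion (f' v₁) (f' v₂) := by
  rw [HInterval.toSet_inter_nonempty_iff_s15, hout v₂ h₂, HInterval.shift_a,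
    HInterval.shift_b] at hint
  by_cases hint₀ : ((f v₁).toSet ∩ (f v₂).toSet).Nonempty
  · obtain ⟨v₃, hv₃, hgt⟩ := hf.2 v₁ v₂ hne hint₀ p hp
    by_cases h₃ : v₃ ∈ S
    · obtain ⟨x, hx, hxS, hlt⟩ := hS.exists_mem_support p hv₃ h₃ (Or.inr h₂)
      exact ⟨x, hx, gtUnion_of_shift_compl hin hout hxS (hgt.trans_lt hlt)⟩
    · exact ⟨v₃, hv₃, gtUnion_of_shift_compl hin hout h₃ hgt⟩
  · rw [HInterval.toSet_inter_nonempty_iff_s15] at hint₀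
    -- shifting both intervals would keep them disjoint
    have h₁ : v₁ ∈ S := by
      by_contra h₁
      rw [hout v₁ h₁, HInterval.shift_a, HInterval.shift_b] at hint
      omega
    rw [hin v₁ h₁] at hint
    obtain ⟨x, hx, hxS, hlt⟩ := hS.exists_mem_support p p.start_mem_support h₁ (Or.inr h₂)
    refine ⟨x, hx, gtUnion_of_shift_compl hin hout hxS ⟨hlt, ?_⟩⟩
    unfold HInterval.Lt at hlt
    have := (f v₁).hab
    omega

theorem IsESF.shift_compl (hf : IsESF G ω f) (hS : IsGuarded G f S)
    (hin : ∀ u ∈ S, f' u = f u) (hout : ∀ u ∉ S, f' u = (f u).shift c) : IsESF G ω f' := by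
  refine ⟨fun v => ?_, fun v₁ v₂ hne hint p hp => ?_⟩
  · by_cases hv : v ∈ S
    · exact hin v hv ▸ hf.1 v
    · exact (hout v hv).symm ▸ (HInterval.len_shift _ _).symm ▸ hf.1 v
  by_cases h₂ : v₂ ∈ S
  · by_cases h₁ : v₁ ∈ S
    · rw [hin v₁ h₁, hin v₂ h₂] at hint ⊢
      obtain ⟨v₃, hv₃, hgt⟩ := hf.2 v₁ v₂ hne hint p hp
      by_cases h₃ : v₃ ∈ S
      · exact ⟨v₃, hv₃, hin v₃ h₃ ▸ hgt⟩
      · refine ⟨v₃, hv₃, ?_⟩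
        simpa only [hin v₁ h₁, hin v₂ h₂] using gtUnion_of_shift_compl hin hout h₃ hgt
    · obtain ⟨w, hw, hgt⟩ := exists_gtUnion_of_shift_compl hf hS hin hout h₁ hne.symm
        (by rwa [Set.inter_comm]) p.reverse hp.reverse
      exact ⟨w, by simpa using hw, hgt.symm⟩
  · exact exists_gtUnion_of_shift_compl hf hS hin hout h₂ hne hint p hp

theorem StructuredESF.shift_compl {r : V} (hf : StructuredESF G ω r f)
    (hS : ∀ x ∈ S, ∀ u, OnPath G r u x → u ∈ S)
    (hin : ∀ u ∈ S, f' u = f u) (hout : ∀ u ∉ S, f' u = (f u).shift c) :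
    StructuredESF G ω r f' := by
  intro x hx u hux hne
  have hlt := hf x hx u hux hne
  by_cases hxS : x ∈ S
  · rwa [hin x hxS, hin u (hS x hxS u hux)]
  · have := b_le_of_shift_compl hin hout u
    rw [hout x hxS]
    unfold HInterval.Lt at hlt ⊢
    rw [HInterval.shift_a]
    omega

end ShiftCompl

section Layers

variable {ω : V → ℝ} {r x : V} {L : Set V}

lemma IsLayerRoot.cost_lt_parent (hG : G.IsTree) (hup : UpMonotonicAt G ω r)
    (hx : IsLayerRoot G ω r x) {px : V} (hadj : G.Adj px x) (hpx : OnPath G r x px) :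
    ω x < ω px := by
  refine (hup x px hpx).lt_of_ne fun heq => hadj.ne (OnPath.antisymm hG (hx px ?_) hpx)
  exact ⟨heq.symm, Walk.cons hadj.symm Walk.nil, by simp [heq]⟩

lemma ProperDescOfRootBelow.of_onPath (hG : G.IsTree) {u v : V}
    (hv : ProperDescOfRootBelow G ω r L v) (huv : OnPath G r u v) :
    ProperDescOfRootBelow G ω r L u := by
  obtain ⟨x, hx, hpx, hvx, hvx'⟩ := hv
  refine ⟨x, hx, hpx, huv.trans_s15 hvx, ?_⟩
  rintro rfl
  exact hvx' (OnPath.antisymm hG hvx huv)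

lemma not_properDescOfRootBelow_of_parent_mem (hG : G.IsTree) (hup : UpMonotonicAt G ω r)
    {c : ℝ} (hc : ∀ u ∈ L, ω u = c)
    (hpx : ∃ px ∈ L, G.Adj px x ∧ OnPath G r x px) :
    ¬ ProperDescOfRootBelow G ω r L x := by
  rintro ⟨y, hy, ⟨py, hpyL, hpy, hrpy⟩, hxy, hxy'⟩
  obtain ⟨px, hpxL, hpx, hrpx⟩ := hpx
  have hy_lt := hy.cost_lt_parent hG hup hpy hrpy
  have hpx_le := hup px y (OnPath.to_parent hG hpx hrpx hxy hxy'.symm)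
  linarith [hc px hpxL, hc py hpyL]

lemma isGuarded_properDescOfRootBelow (hG : G.IsTree) (hup : UpMonotonicAt G ω r)
    {c : ℝ} (hc : ∀ u ∈ L, ω u = c) {f : V → HInterval} (hstr : StructuredESF G ω r f) :
    IsGuarded G f {u | ProperDescOfRootBelow G ω r L u} := by
  rintro v ⟨x, hx, hpx, hvx, hvx'⟩
  refine ⟨x, not_properDescOfRootBelow_of_parent_mem hG hup hc hpx, hstr x hx v hvx hvx',
    fun w hw p => ?_⟩
  by_cases hwx : w = x
  · subst hwx
    exact p.end_mem_support
  · exact OnPath.mem_support_of_not_onPath hvx (fun hrwx => hw ⟨x, hx, hpx, hrwx, hwx⟩) p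

end Layers

theorem stmt15_general {V : Type u} (G : SimpleGraph V) (hG : G.IsTree)
    (ω : V → ℝ) (r : V) (hup : UpMonotonicAt G ω r)
    (f_opt : V → HInterval)
    (hESF : IsESF G ω f_opt) (hstr : StructuredESF G ω r f_opt)
    (L : Set V)
    (c : ℕ) (hc : ∀ u ∈ L, ω u = (c : ℝ))
    (f' : V → HInterval)
    (hf'₁ : ∀ u, ProperDescOfRootBelow G ω r L u → f' u = f_opt u)
    (hf'₂ : ∀ u, ¬ ProperDescOfRootBelow G ω r L u → f' u = (f_opt u).shift c) :
    IsESF G ω f' ∧ StructuredESF G ω r f' :=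
  ⟨hESF.shift_compl (isGuarded_properDescOfRootBelow hG hup hc hstr) hf'₁ hf'₂,
    hstr.shift_compl (fun _ hv _ huv => ProperDescOfRootBelow.of_onPath hG hv huv) hf'₁ hf'₂⟩

/-- Let `T = (V,E,ω)` be a tree with an up-monotonic and rounded cost
function rooted at `r`, and let `f_opt` be an optimal structured extended strategy
function on `V`. Let `L` be a layer component of `T` (of cost `c = ω(L)`) and define
`f'` by `f'(u) = f_opt(u)` for every proper descendant `u` of a root of a layer
component directly below `L`, and `f'(u) = f_opt(u) + ω(L)` for every other vertex `u`.
Then `f'` is a structured extended strategy function on `V`. -/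
theorem stmt15 {V : Type u} [Fintype V] (G : SimpleGraph V) (hG : G.IsTree)
    (ω : V → ℝ) (r : V) (hup : UpMonotonicAt G ω r) (hround : Rounded ω)
    (f_opt : V → HInterval)
    (hESF : IsESF G ω f_opt) (hstr : StructuredESF G ω r f_opt)
    (hopt : ∀ g : V → HInterval, IsESF G ω g → StructuredESF G ω r g →
      supEnd f_opt ≤ supEnd g)
    (L : Set V) (hL : IsLayerComp G ω L)
    (c : ℕ) (hc : ∀ u ∈ L, ω u = (c : ℝ))
    (f' : V → HInterval)
    (hf'₁ : ∀ u, ProperDescOfRootBelow G ω r L u → f' u = f_opt u)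
    (hf'₂ : ∀ u, ¬ ProperDescOfRootBelow G ω r L u → f' u = (f_opt u).shift c) :
    IsESF G ω f' ∧ StructuredESF G ω r f' :=
  stmt15_general G hG ω r hup f_opt hESF hstr L c hc f' hf'₁ hf'₂
end
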